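/- arXiv:2503.12735 — 11 statements merged into one kernel-verified Lean document; each statement's English description precedes it below -/
import Mathlib

section
/- For integers 0 ≤ k ≤ n, the falling factorial satisfies n^k / n^{↓k} ≤ e^k, where n^{↓k} = n(n-1)···(n-k+1). -/
open Nat Finset

lemma aux_pow_mul_factorial_le (n k : ℕ) (h : k ≤ n) :
    n ^ k * k ! ≤ k ^ k * n.descFactorial k := by
  have hk : k ! = k.descFactorial k := (Nat.descFactorial_self k).symm
  have hn : ∀ m : ℕ, m ^ k = ∏ _i ∈ range k, m := by simp
  rw [hk, Nat.descFactorial_eq_prod_range, Nat.descFactorial_eq_prod_range, hn, hn,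
    ← Finset.prod_mul_distrib, ← Finset.prod_mul_distrib]
  apply Finset.prod_le_prod'
  intro i hi
  have hik : i < k := Finset.mem_range.mp hi
  zify [le_of_lt hik, le_trans (le_of_lt hik) h]
  have hkn : (k : ℤ) ≤ n := by exact_mod_cast h
  have hi0 : (0 : ℤ) ≤ i := Int.natCast_nonneg i
  nlinarith [hkn, hi0]

lemma aux_pow_div_factorial_le_exp (k : ℕ) : (k : ℝ) ^ k / k ! ≤ Real.exp k := by
  have h := Real.sum_le_exp_of_nonneg (x := (k : ℝ)) (Nat.cast_nonneg k) (k + 1)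
  refine le_trans ?_ h
  have : (k : ℝ) ^ k / k ! = ((fun i => (k : ℝ) ^ i / i !) k) := rfl
  rw [this]
  apply Finset.single_le_sum (f := fun i => (k : ℝ) ^ i / i !)
  · intro i _
    positivity
  · simp

/-- For integers `0 ≤ k ≤ n`, `n^k / n^{↓k} ≤ e^k`, where `n^{↓k}` is the
falling factorial `n(n-1)⋯(n-k+1)`. -/
theorem pow_div_descFactorial_le (n k : ℕ) (h : k ≤ n) :
    (n : ℝ) ^ k / (n.descFactorial k : ℝ) ≤ Real.exp 1 ^ k := by
  have hd : 0 < (n.descFactorial k : ℝ) := by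
    have : n.descFactorial k ≠ 0 := by
      simp only [ne_eq, Nat.descFactorial_eq_zero_iff_lt]; omega
    exact_mod_cast Nat.pos_of_ne_zero this
  have hf : 0 < (k ! : ℝ) := by exact_mod_cast k.factorial_pos
  rw [div_le_iff₀ hd]
  have h1 : (n : ℝ) ^ k * k ! ≤ (k : ℝ) ^ k * n.descFactorial k := by
    exact_mod_cast aux_pow_mul_factorial_le n k h
  have h2 : (k : ℝ) ^ k ≤ Real.exp k * k ! := by
    have h2' := aux_pow_div_factorial_le_exp k
    rw [div_le_iff₀ hf] at h2'
    exact h2'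
  have h3 : Real.exp (k : ℝ) = Real.exp 1 ^ k := by
    rw [← Real.exp_nat_mul]; ring_nf
  have hdn : (0 : ℝ) ≤ (n.descFactorial k : ℝ) := le_of_lt hd
  have h4 : (n : ℝ) ^ k * k ! ≤ Real.exp 1 ^ k * n.descFactorial k * k ! := by
    rw [← h3]
    nlinarith [mul_le_mul_of_nonneg_right h2 hdn]
  exact le_of_mul_le_mul_right h4 hf
end

section
/- Let λ be a Young diagram partitioned into disjoint pieces λ(1),…,λ(p) such that each initial union λ(1)∪…∪λ(j) is a Young diagram. Then d_λ/|λ|! ≤ Π_{i=1}^p d_{λ(i)}/|λ(i)|!, where d_{λ(i)} is the number of standard tableaux of the skew shape λ(i). -/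
open scoped Classical

/-- Number of standard Young tableaux of an arbitrary finite set of boxes
(rows and columns indexed by `ℕ`): bijective fillings with `1,…,|s|` that are
(weakly, hence strictly) increasing along rows and columns. -/
noncomputable def sytCount (s : Finset (ℕ × ℕ)) : ℕ :=
  Nat.card {f : {p // p ∈ s} ≃ Fin s.card //
    ∀ p q : {p // p ∈ s}, (p : ℕ × ℕ).1 ≤ (q : ℕ × ℕ).1 → (p : ℕ × ℕ).2 ≤ (q : ℕ × ℕ).2 →
      (f p : ℕ) ≤ (f q : ℕ)}

/-- Hook length of a box `u` in the Young diagram `μ`. -/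
noncomputable def hookLen (μ : YoungDiagram) (u : ℕ × ℕ) : ℕ :=
  (μ.cells.filter (fun v => (v.1 = u.1 ∧ u.2 ≤ v.2) ∨ (u.1 ≤ v.1 ∧ v.2 = u.2))).card

/-- One excitation step: a free box of `E` moves diagonally by `(1,1)` inside `μ`. -/
def ExcitedStep (μ : YoungDiagram) (E F : Finset (ℕ × ℕ)) : Prop :=
  ∃ u ∈ E, (u.1 + 1, u.2 + 1) ∈ μ ∧ (u.1 + 1, u.2) ∉ E ∧ (u.1, u.2 + 1) ∉ E ∧
    (u.1 + 1, u.2 + 1) ∉ E ∧ F = insert (u.1 + 1, u.2 + 1) (E.erase u)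

/-- The set of excited diagrams of `E` in `μ`. -/
noncomputable def excitedSet (μ : YoungDiagram) (E : Finset (ℕ × ℕ)) :
    Finset (Finset (ℕ × ℕ)) :=
  μ.cells.powerset.filter (fun F => Relation.ReflTransGen (ExcitedStep μ) E F)

/-- The excited sum `S(μ, E)`. -/
noncomputable def excitedSum (μ : YoungDiagram) (E : Finset (ℕ × ℕ)) : ℕ :=
  ∑ F ∈ excitedSet μ E, ∏ u ∈ F, hookLen μ u

/-- The row diagram `[ℓ]`: the first `ℓ` boxes of the first row. -/
def rowSeg (ℓ : ℕ) : Finset (ℕ × ℕ) := (Finset.range ℓ).image (fun j => ((0 : ℕ), j))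

/-- Diagonal length of a Young diagram. -/
def diagLen (μ : YoungDiagram) : ℕ :=
  ((Finset.range μ.card).filter (fun i => (i, i) ∈ μ)).card

namespace SytProofAux

open Finset

variable {p : ℕ}

/-- Abbreviation for the type of standard tableaux of a box set. -/
noncomputable abbrev SytT (s : Finset (ℕ × ℕ)) :=
  {f : {q // q ∈ s} ≃ Fin s.card //
    ∀ a b : {q // q ∈ s}, (a : ℕ × ℕ).1 ≤ (b : ℕ × ℕ).1 → (a : ℕ × ℕ).2 ≤ (b : ℕ × ℕ).2 →
      (f a : ℕ) ≤ (f b : ℕ)}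

lemma sytCount_eq (s : Finset (ℕ × ℕ)) : sytCount s = Nat.card (SytT s) := rfl

/-- Values used by piece `i` under the tableau `f`. -/
noncomputable def valSet {s : Finset (ℕ × ℕ)} (pieces : Fin p → Finset (ℕ × ℕ))
    (f : {q // q ∈ s} ≃ Fin s.card) (i : Fin p) : Finset (Fin s.card) :=
  Finset.univ.filter fun k => ((f.symm k : {q // q ∈ s}) : ℕ × ℕ) ∈ pieces i

lemma mem_valSet {s : Finset (ℕ × ℕ)} {pieces : Fin p → Finset (ℕ × ℕ)}
    {f : {q // q ∈ s} ≃ Fin s.card} {i : Fin p} {k : Fin s.card} :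
    k ∈ valSet pieces f i ↔ ((f.symm k : {q // q ∈ s}) : ℕ × ℕ) ∈ pieces i := by
  simp [valSet]

lemma valSet_card {s : Finset (ℕ × ℕ)} (pieces : Fin p → Finset (ℕ × ℕ))
    (f : {q // q ∈ s} ≃ Fin s.card) (i : Fin p) (hsub : pieces i ⊆ s) :
    (valSet pieces f i).card = (pieces i).card := by
  apply Finset.card_bij (fun k _ => ((f.symm k : {q // q ∈ s}) : ℕ × ℕ))
  · intro k hk; exact mem_valSet.mp hk
  · intro k hk k' hk' h
    exact f.symm.injective (Subtype.ext h) |>.symm ▸ rfl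
  · intro q hq
    exact ⟨f ⟨q, hsub hq⟩, mem_valSet.mpr (by simpa using hq), by simp⟩

lemma oio_symm_val_inj {N a b : ℕ} {s s' : Finset (Fin N)} (hss : s = s')
    {hs : s.card = a} {hs' : s'.card = b} {x y : Fin N} {hx : x ∈ s} {hy : y ∈ s'}
    (h : (((s.orderIsoOfFin hs).symm ⟨x, hx⟩ : Fin a) : ℕ) =
      (((s'.orderIsoOfFin hs').symm ⟨y, hy⟩ : Fin b) : ℕ)) : x = y := by
  subst hss; subst hs; subst hs'
  have h1 := Fin.val_injective h
  have h2 := ((s.orderIsoOfFin rfl).symm).injective h1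
  exact congrArg Subtype.val h2

lemma oio_symm_val_congr {N a b : ℕ} {s s' : Finset (Fin N)} (hss : s = s')
    {hs : s.card = a} {hs' : s'.card = b} {x : Fin N} {hx : x ∈ s} {hx' : x ∈ s'} :
    (((s.orderIsoOfFin hs).symm ⟨x, hx⟩ : Fin a) : ℕ) =
      (((s'.orderIsoOfFin hs').symm ⟨x, hx'⟩ : Fin b) : ℕ) := by
  subst hss; subst hs; subst hs'; rfl

lemma perm_val_congr {n : Fin p → ℕ} (σ : ∀ i, Equiv.Perm (Fin (n i))) {i j : Fin p}
    (hij : i = j) {x : Fin (n i)} {y : Fin (n j)} (hxy : (x : ℕ) = (y : ℕ)) :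
    ((σ i x : Fin (n i)) : ℕ) = ((σ j y : Fin (n j)) : ℕ) := by
  subst hij; rw [Fin.val_injective hxy]

lemma perm_val_inj {n : Fin p → ℕ} (σ : ∀ i, Equiv.Perm (Fin (n i))) {i j : Fin p}
    (hij : i = j) {x : Fin (n i)} {y : Fin (n j)}
    (h : ((σ i x : Fin (n i)) : ℕ) = ((σ j y : Fin (n j)) : ℕ)) : (x : ℕ) = (y : ℕ) := by
  subst hij
  exact congrArg Fin.val ((σ i).injective (Fin.val_injective h))

/-- The order-normalised restriction of a tableau to a piece, as a function. -/
noncomputable def pieceFun {s : Finset (ℕ × ℕ)} {pieces : Fin p → Finset (ℕ × ℕ)}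
    (hsub : ∀ i, pieces i ⊆ s) (f : {q // q ∈ s} ≃ Fin s.card) (i : Fin p) :
    {q // q ∈ pieces i} → Fin (pieces i).card :=
  fun q => ((valSet pieces f i).orderIsoOfFin (valSet_card pieces f i (hsub i))).symm
    ⟨f ⟨q.1, hsub i q.2⟩, mem_valSet.mpr (by simpa using q.2)⟩

lemma pieceFun_inj {s : Finset (ℕ × ℕ)} {pieces : Fin p → Finset (ℕ × ℕ)}
    (hsub : ∀ i, pieces i ⊆ s) (f : {q // q ∈ s} ≃ Fin s.card) (i : Fin p) :
    Function.Injective (pieceFun hsub f i) := by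
  intro a b h
  have h2 := congrArg Fin.val h
  simp only [pieceFun] at h2
  have h3 := oio_symm_val_inj rfl h2
  have h4 := f.injective h3
  exact Subtype.ext (congrArg (fun z : {q // q ∈ s} => z.1) h4)

noncomputable def pieceEquiv {s : Finset (ℕ × ℕ)} {pieces : Fin p → Finset (ℕ × ℕ)}
    (hsub : ∀ i, pieces i ⊆ s) (f : {q // q ∈ s} ≃ Fin s.card) (i : Fin p) :
    {q // q ∈ pieces i} ≃ Fin (pieces i).card :=
  Equiv.ofBijective _ ((Fintype.bijective_iff_injective_and_card _).2
    ⟨pieceFun_inj hsub f i, by simp⟩)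

lemma pieceEquiv_mono {s : Finset (ℕ × ℕ)} {pieces : Fin p → Finset (ℕ × ℕ)}
    (hsub : ∀ i, pieces i ⊆ s) (f : {q // q ∈ s} ≃ Fin s.card)
    (hf : ∀ a b : {q // q ∈ s}, (a : ℕ × ℕ).1 ≤ (b : ℕ × ℕ).1 →
      (a : ℕ × ℕ).2 ≤ (b : ℕ × ℕ).2 → (f a : ℕ) ≤ (f b : ℕ)) (i : Fin p) :
    ∀ a b : {q // q ∈ pieces i}, (a : ℕ × ℕ).1 ≤ (b : ℕ × ℕ).1 →
      (a : ℕ × ℕ).2 ≤ (b : ℕ × ℕ).2 →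
      (pieceEquiv hsub f i a : ℕ) ≤ (pieceEquiv hsub f i b : ℕ) := by
  intro a b h1 h2
  have hfab : (f ⟨a.1, hsub i a.2⟩ : ℕ) ≤ (f ⟨b.1, hsub i b.2⟩ : ℕ) := hf _ _ h1 h2
  show (pieceFun hsub f i a : ℕ) ≤ (pieceFun hsub f i b : ℕ)
  simp only [pieceFun]
  refine Fin.le_def.mp (((valSet pieces f i).orderIsoOfFin
      (valSet_card pieces f i (hsub i))).symm.monotone ?_)
  exact Subtype.mk_le_mk.mpr (Fin.le_def.mpr hfab)

/-- The normalised position of the value `k` within its piece. -/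
noncomputable def normIdx {s : Finset (ℕ × ℕ)} {pieces : Fin p → Finset (ℕ × ℕ)}
    (hsub : ∀ i, pieces i ⊆ s) (pick : {q // q ∈ s} → Fin p)
    (hpick : ∀ q, (q : ℕ × ℕ) ∈ pieces (pick q))
    (f : {q // q ∈ s} ≃ Fin s.card) (k : Fin s.card) :
    Fin (pieces (pick (f.symm k))).card :=
  ((valSet pieces f (pick (f.symm k))).orderIsoOfFin
      (valSet_card pieces f _ (hsub _))).symm ⟨k, mem_valSet.mpr (hpick (f.symm k))⟩

noncomputable def bigFun {s : Finset (ℕ × ℕ)} {pieces : Fin p → Finset (ℕ × ℕ)}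
    (hsub : ∀ i, pieces i ⊆ s) (pick : {q // q ∈ s} → Fin p)
    (hpick : ∀ q, (q : ℕ × ℕ) ∈ pieces (pick q))
    (f : {q // q ∈ s} ≃ Fin s.card) (σ : ∀ i, Equiv.Perm (Fin (pieces i).card)) :
    Fin s.card → Σ i, Fin (pieces i).card :=
  fun k => ⟨pick (f.symm k), σ _ (normIdx hsub pick hpick f k)⟩

lemma bigFun_inj {s : Finset (ℕ × ℕ)} {pieces : Fin p → Finset (ℕ × ℕ)}
    (hsub : ∀ i, pieces i ⊆ s) (pick : {q // q ∈ s} → Fin p)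
    (hpick : ∀ q, (q : ℕ × ℕ) ∈ pieces (pick q))
    (f : {q // q ∈ s} ≃ Fin s.card) (σ : ∀ i, Equiv.Perm (Fin (pieces i).card)) :
    Function.Injective (bigFun hsub pick hpick f σ) := by
  intro k k' h
  have h1 : pick (f.symm k) = pick (f.symm k') := congrArg Sigma.fst h
  have h2 : ((σ _ (normIdx hsub pick hpick f k) : Fin _) : ℕ) =
      ((σ _ (normIdx hsub pick hpick f k') : Fin _) : ℕ) :=
    congrArg (fun z : Σ j, Fin (pieces j).card => (z.2 : ℕ)) h
  have h3 := perm_val_inj σ h1 h2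
  simp only [normIdx] at h3
  exact oio_symm_val_inj (congrArg (valSet pieces f) h1) h3

noncomputable def bigEquiv {s : Finset (ℕ × ℕ)} {pieces : Fin p → Finset (ℕ × ℕ)}
    (hsub : ∀ i, pieces i ⊆ s) (pick : {q // q ∈ s} → Fin p)
    (hpick : ∀ q, (q : ℕ × ℕ) ∈ pieces (pick q))
    (f : {q // q ∈ s} ≃ Fin s.card) (σ : ∀ i, Equiv.Perm (Fin (pieces i).card))
    (hsum : ∑ i, (pieces i).card = s.card) :
    Fin s.card ≃ Σ i, Fin (pieces i).card :=
  Equiv.ofBijective _ ((Fintype.bijective_iff_injective_and_card _).2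
    ⟨bigFun_inj hsub pick hpick f σ, by simp [hsum]⟩)

end SytProofAux


open SytProofAux

/-- If a Young diagram `λ` is partitioned into disjoint pieces `λ(1),…,λ(p)` such
that each initial union `λ(1) ∪ ⋯ ∪ λ(j)` is a Young diagram, then
`d_λ/|λ|! ≤ ∏ᵢ d_{λ(i)}/|λ(i)|!`. -/
theorem sytCount_div_factorial_le_prod (lam : YoungDiagram) (p : ℕ)
    (pieces : Fin p → Finset (ℕ × ℕ))
    (hdisj : ∀ i j, i ≠ j → Disjoint (pieces i) (pieces j))
    (hcover : Finset.univ.biUnion pieces = lam.cells)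
    (hinit : ∀ j : Fin p, ∃ ν : YoungDiagram,
      ν.cells = (Finset.univ.filter (fun i => i ≤ j)).biUnion pieces) :
    (sytCount lam.cells : ℝ) / (lam.card.factorial : ℝ) ≤
      ∏ i, (sytCount (pieces i) : ℝ) / ((pieces i).card.factorial : ℝ) := by
  classical
  have hsub : ∀ i, pieces i ⊆ lam.cells := fun i => by
    rw [← hcover]; exact Finset.subset_biUnion_of_mem pieces (Finset.mem_univ i)
  have hsum : ∑ i, (pieces i).card = lam.cells.card := by
    rw [← hcover, Finset.card_biUnion (fun i _ j _ h => hdisj i j h)]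
  have hex : ∀ q : {q // q ∈ lam.cells}, ∃ i, (q : ℕ × ℕ) ∈ pieces i := by
    intro q
    have hq : (q : ℕ × ℕ) ∈ Finset.univ.biUnion pieces := by
      rw [hcover]; exact q.2
    simpa using Finset.mem_biUnion.mp hq
  obtain ⟨pick, hpick⟩ : ∃ pk : {q // q ∈ lam.cells} → Fin p,
      ∀ q, (q : ℕ × ℕ) ∈ pieces (pk q) :=
    ⟨fun q => (hex q).choose, fun q => (hex q).choose_spec⟩
  have huniq : ∀ (u : ℕ × ℕ) (i j : Fin p), u ∈ pieces i → u ∈ pieces j → i = j := by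
    intro u i j hi hj
    by_contra h
    exact Finset.disjoint_left.mp (hdisj i j h) hi hj
  -- the key counting inequality over ℕ
  have key : sytCount lam.cells * ∏ i, (pieces i).card.factorial ≤
      (∏ i, sytCount (pieces i)) * lam.cells.card.factorial := by
    have hinj : Function.Injective
        (fun x : SytT lam.cells × (∀ i, Equiv.Perm (Fin (pieces i).card)) =>
          ((fun i => (⟨pieceEquiv hsub x.1.1 i, pieceEquiv_mono hsub x.1.1 x.1.2 i⟩ :
              SytT (pieces i))),
            bigEquiv hsub pick hpick x.1.1 x.2 hsum)) := by
      rintro ⟨⟨f, hfm⟩, σ⟩ ⟨⟨f', hfm'⟩, σ'⟩ hxy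
      simp only [Prod.mk.injEq] at hxy
      obtain ⟨hP, hB⟩ := hxy
      have hPieceEq : ∀ i, pieceEquiv hsub f i = pieceEquiv hsub f' i := fun i =>
        congrArg Subtype.val (congrFun hP i)
      have hfst : ∀ k : Fin lam.cells.card, pick (f.symm k) = pick (f'.symm k) := by
        intro k
        have h0 := congrFun (congrArg
          (fun e : Fin lam.cells.card ≃ (Σ j, Fin (pieces j).card) =>
            (e : Fin lam.cells.card → Σ j, Fin (pieces j).card)) hB) k
        exact congrArg Sigma.fst h0
      have hVS : ∀ i, valSet pieces f i = valSet pieces f' i := by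
        intro i
        ext k
        simp only [mem_valSet]
        constructor
        · intro hk
          have h1 : pick (f.symm k) = i := huniq _ _ _ (hpick (f.symm k)) hk
          have h2 := hpick (f'.symm k)
          rw [← hfst k, h1] at h2
          exact h2
        · intro hk
          have h1 : pick (f'.symm k) = i := huniq _ _ _ (hpick (f'.symm k)) hk
          have h2 := hpick (f.symm k)
          rw [hfst k, h1] at h2
          exact h2
      have hff : f = f' := by
        apply Equiv.ext
        intro q
        have h1 := congrArg (fun e : {r // r ∈ pieces (pick q)} ≃ Fin (pieces (pick q)).card =>
          ((e ⟨q.1, hpick q⟩ : Fin (pieces (pick q)).card) : ℕ)) (hPieceEq (pick q))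
        simp only [pieceEquiv, Equiv.ofBijective_apply, pieceFun] at h1
        exact oio_symm_val_inj (hVS (pick q)) h1
      subst hff
      have hσ : σ = σ' := by
        funext i
        apply Equiv.ext
        intro m
        have hc := valSet_card pieces f i (hsub i)
        set k : Fin lam.cells.card :=
          (((valSet pieces f i).orderIsoOfFin hc) m : Fin lam.cells.card) with hkdef
        have hkmem : k ∈ valSet pieces f i := (((valSet pieces f i).orderIsoOfFin hc) m).2
        have hik : pick (f.symm k) = i := huniq _ _ _ (hpick (f.symm k)) (mem_valSet.mp hkmem)
        have hBk := congrFun (congrArg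
          (fun e : Fin lam.cells.card ≃ (Σ j, Fin (pieces j).card) =>
            (e : Fin lam.cells.card → Σ j, Fin (pieces j).card)) hB) k
        have hsnd : ((σ (pick (f.symm k)) (normIdx hsub pick hpick f k) : Fin _) : ℕ) =
            ((σ' (pick (f.symm k)) (normIdx hsub pick hpick f k) : Fin _) : ℕ) :=
          congrArg (fun z : Σ j, Fin (pieces j).card => (z.2 : ℕ)) hBk
        have hmval : (m : ℕ) = ((normIdx hsub pick hpick f k : Fin _) : ℕ) := by
          have h0 : ((valSet pieces f i).orderIsoOfFin hc).symm ⟨k, hkmem⟩ = m :=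
            ((valSet pieces f i).orderIsoOfFin hc).symm_apply_apply m
          calc (m : ℕ)
              = ((((valSet pieces f i).orderIsoOfFin hc).symm ⟨k, hkmem⟩ : Fin _) : ℕ) := by
                rw [h0]
            _ = ((normIdx hsub pick hpick f k : Fin _) : ℕ) := by
                simp only [normIdx]
                exact oio_symm_val_congr (congrArg (valSet pieces f) hik.symm)
        have goalval : ((σ i m : Fin _) : ℕ) = ((σ' i m : Fin _) : ℕ) := by
          calc ((σ i m : Fin _) : ℕ)
              = ((σ (pick (f.symm k)) (normIdx hsub pick hpick f k) : Fin _) : ℕ) :=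
                perm_val_congr σ hik.symm hmval
            _ = ((σ' (pick (f.symm k)) (normIdx hsub pick hpick f k) : Fin _) : ℕ) := hsnd
            _ = ((σ' i m : Fin _) : ℕ) := (perm_val_congr σ' hik.symm hmval).symm
        exact Fin.val_injective goalval
      simp only [Prod.mk.injEq, Subtype.mk.injEq]
      exact ⟨trivial, hσ⟩
    have hle := Nat.card_le_card_of_injective _ hinj
    rw [Nat.card_prod, Nat.card_prod, Nat.card_pi, Nat.card_pi] at hle
    have e1 : ∀ i : Fin p, Nat.card (Equiv.Perm (Fin (pieces i).card)) =
        (pieces i).card.factorial := by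
      intro i
      simp [Nat.card_eq_fintype_card, Fintype.card_perm]
    have e2 : Nat.card (Fin lam.cells.card ≃ Σ i, Fin (pieces i).card) =
        lam.cells.card.factorial := by
      rw [Nat.card_eq_fintype_card,
        Fintype.card_equiv (Fintype.equivOfCardEq (by simp [hsum]))]
      simp
    rw [Finset.prod_congr rfl (fun i _ => e1 i), e2] at hle
    calc sytCount lam.cells * ∏ i, (pieces i).card.factorial
        = Nat.card (SytT lam.cells) * ∏ i, (pieces i).card.factorial := by
          rw [sytCount_eq]
      _ ≤ (∏ i, Nat.card (SytT (pieces i))) * lam.cells.card.factorial := hle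
      _ = (∏ i, sytCount (pieces i)) * lam.cells.card.factorial := by
          rw [Finset.prod_congr rfl (fun i _ => (sytCount_eq (pieces i)).symm)]
  -- pass to the reals
  have hb : (0 : ℝ) < (lam.card.factorial : ℝ) := by
    exact_mod_cast Nat.factorial_pos lam.card
  have hd : (0 : ℝ) < ∏ i, ((pieces i).card.factorial : ℝ) :=
    Finset.prod_pos fun i _ => by exact_mod_cast Nat.factorial_pos (pieces i).card
  rw [Finset.prod_div_distrib, div_le_div_iff₀ hb hd]
  have h1 : ((sytCount lam.cells * ∏ i, (pieces i).card.factorial : ℕ) : ℝ) ≤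
      (((∏ i, sytCount (pieces i)) * lam.cells.card.factorial : ℕ) : ℝ) := by
    exact_mod_cast key
  push_cast at h1
  exact h1
end

section
/- Let λ ⊢ n be a Young diagram and M ≥ 1 an integer. If u is a box of λ lying strictly outside the first M hooks (i.e., u = (i,j) with min(i,j) > M), then the hook length of u in λ satisfies H(λ,u) ≤ n/M. -/
open scoped Classical

/-! The hooks of the boxes `u - (t, t)`, `t ≤ min u.1 u.2`, on the diagonal through `u` are
pairwise disjoint, and each is at least as long as the hook of `u`, since translating the hook
of `u` by `-(t, t)` lands inside it. Hence `(min u.1 u.2 + 1) * hookLen λ u ≤ |λ|`. -/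

namespace YoungDiagram

def hook (μ : YoungDiagram) (u : ℕ × ℕ) : Finset (ℕ × ℕ) :=
  μ.cells.filter (fun v => (v.1 = u.1 ∧ u.2 ≤ v.2) ∨ (u.1 ≤ v.1 ∧ v.2 = u.2))

variable (μ : YoungDiagram)

theorem card_hook (u : ℕ × ℕ) : (μ.hook u).card = hookLen μ u := rfl

@[simp]
theorem mem_hook {u v : ℕ × ℕ} :
    v ∈ μ.hook u ↔ v ∈ μ ∧ ((v.1 = u.1 ∧ u.2 ≤ v.2) ∨ (u.1 ≤ v.1 ∧ v.2 = u.2)) := by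
  simp [hook]

theorem hookLen_le_hookLen_of_le {u v : ℕ × ℕ} (hvu : v ≤ u) : hookLen μ u ≤ hookLen μ v := by
  rw [← card_hook, ← card_hook]
  refine Finset.card_le_card_of_injOn (fun w => w - (u - v))
    (fun w hw => ?_) (fun w hw w' hw' => ?_)
  · obtain ⟨hv1, hv2⟩ := Prod.mk_le_mk.mp hvu
    rw [Finset.mem_coe, mem_hook] at hw ⊢
    refine ⟨μ.isLowerSet tsub_le_self hw.1, ?_⟩
    simp only [Prod.fst_sub, Prod.snd_sub]
    omega
  · rw [Finset.mem_coe, mem_hook] at hw hw'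
    simp only [Prod.ext_iff, Prod.fst_sub, Prod.snd_sub]
    omega

theorem disjoint_hook_of_mem_diag {u v : ℕ × ℕ} (hdiag : u.1 + v.2 = v.1 + u.2)
    (hne : u ≠ v) : Disjoint (μ.hook u) (μ.hook v) := by
  rw [Finset.disjoint_left]
  intro w hwu hwv
  rw [mem_hook] at hwu hwv
  rw [Ne, Prod.ext_iff] at hne
  omega

theorem succ_min_mul_hookLen_le_card (u : ℕ × ℕ) :
    (min u.1 u.2 + 1) * hookLen μ u ≤ μ.card := by
  set diag : ℕ → ℕ × ℕ := fun t => (u.1 - t, u.2 - t)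
  have hdisj :
      (↑(Finset.range (min u.1 u.2 + 1)) : Set ℕ).PairwiseDisjoint (μ.hook ∘ diag) := by
    intro s hs t ht hst
    rw [Finset.coe_range, Set.mem_Iio] at hs ht
    refine μ.disjoint_hook_of_mem_diag (by simp only [diag]; omega) ?_
    simp only [diag, Ne, Prod.ext_iff]
    omega
  calc (min u.1 u.2 + 1) * hookLen μ u
      = ∑ _t ∈ Finset.range (min u.1 u.2 + 1), hookLen μ u := by simp
    _ ≤ ∑ t ∈ Finset.range (min u.1 u.2 + 1), (μ.hook (diag t)).card :=
        Finset.sum_le_sum fun _ _ =>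
          μ.hookLen_le_hookLen_of_le (Prod.mk_le_mk.mpr ⟨tsub_le_self, tsub_le_self⟩)
    _ = ((Finset.range (min u.1 u.2 + 1)).biUnion (μ.hook ∘ diag)).card :=
        (Finset.card_biUnion hdisj).symm
    _ ≤ μ.cells.card :=
        Finset.card_le_card (Finset.biUnion_subset.mpr fun _ _ => Finset.filter_subset _ _)

end YoungDiagram

theorem hookLen_le_of_deep_general (n M : ℕ) (hM : 1 ≤ M) (lam : YoungDiagram)
    (h : lam.card = n) (u : ℕ × ℕ) (hmin : M ≤ min u.1 u.2) :
    (hookLen lam u : ℝ) ≤ (n : ℝ) / (M : ℝ) := by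
  rw [le_div_iff₀ (by exact_mod_cast hM), ← h]
  have hM_mul : M * hookLen lam u ≤ lam.card :=
    (Nat.mul_le_mul_right _ (by omega)).trans (lam.succ_min_mul_hookLen_le_card u)
  exact_mod_cast (mul_comm _ _).trans_le hM_mul

/-- If `λ ⊢ n` and `u` is a box of `λ` lying strictly outside the first `M`
hooks (i.e. `min u.1 u.2 ≥ M` in 0-indexed coordinates), then the hook length
of `u` in `λ` is at most `n/M`. -/
theorem hookLen_le_of_deep (n M : ℕ) (hM : 1 ≤ M) (lam : YoungDiagram)
    (h : lam.card = n) (u : ℕ × ℕ) (hu : u ∈ lam) (hmin : M ≤ min u.1 u.2) :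
    (hookLen lam u : ℝ) ≤ (n : ℝ) / (M : ℝ) :=
  hookLen_le_of_deep_general n M hM lam h u hmin
end

section
/- Let λ be a Young diagram with n boxes, and let ℓ ≤ λ₁ (the length of the first row). The number of excited diagrams of the single row [ℓ] in λ is at most C(ℓ + ⌊n/ℓ⌋, ℓ). -/
open scoped Classical

/-!
An excited diagram of `[ℓ]` has its `k`-th box at `(g k, k + g k)` for a weakly increasing `g`:
box `k` can only be excited when box `k + 1` is not right next to it, i.e. when
`g k < g (k + 1)`. Hence the columns `k + g k` are distinct and determine the diagram, and
every column `c ≥ ℓ` is `< ℓ + ⌊n/ℓ⌋`, since its box `(g k, c)` spans a rectangle of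
`(g k + 1)(c + 1) ≥ ℓ (c + 1 - ℓ)` boxes inside `λ`. So the diagrams inject into the `ℓ`-subsets of
`{0, …, ℓ + ⌊n/ℓ⌋ - 1}`.
-/

open Finset Function

theorem Finset.image_update_univ_of_injective {ι α : Type*} [Fintype ι] [DecidableEq ι]
    [DecidableEq α] {f : ι → α} (hf : Injective f) (i : ι) (a : α) :
    univ.image (update f i a) = insert a ((univ.image f).erase (f i)) := by
  ext x
  simp only [mem_image, mem_univ, true_and, mem_insert, mem_erase, update_apply]
  constructor
  · rintro ⟨j, rfl⟩
    split_ifs with hj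
    · exact .inl rfl
    · exact .inr ⟨hf.ne hj, j, rfl⟩
  · rintro (rfl | ⟨hx, j, rfl⟩)
    · exact ⟨i, if_pos rfl⟩
    · exact ⟨j, if_neg (by rintro rfl; exact hx rfl)⟩

namespace YoungDiagram

theorem mul_le_card_of_mem (μ : YoungDiagram) {i j : ℕ} (hij : (i, j) ∈ μ) :
    (i + 1) * (j + 1) ≤ μ.card := by
  have hrect : range (i + 1) ×ˢ range (j + 1) ⊆ μ.cells := by
    rintro ⟨a, b⟩ hab
    simp only [mem_product, mem_range] at hab
    exact μ.up_left_mem (by omega) (by omega) hij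
  simpa using card_le_card hrect

theorem add_lt_add_card_div_of_mem (μ : YoungDiagram) {i k ℓ : ℕ} (hk : k < ℓ)
    (hmem : (i, k + i) ∈ μ) : k + i < ℓ + μ.card / ℓ := by
  rcases lt_or_ge (k + i) ℓ with hlt | hge
  · exact hlt.trans_le (Nat.le_add_right _ _)
  suffices (k + i + 1 - ℓ) * ℓ ≤ μ.card by
    have := (Nat.le_div_iff_mul_le (by omega)).2 this
    omega
  calc (k + i + 1 - ℓ) * ℓ ≤ (i + 1) * (k + i + 1) := Nat.mul_le_mul (by omega) (by omega)
    _ ≤ μ.card := μ.mul_le_card_of_mem hmem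

end YoungDiagram

section RowExcitation

variable {ℓ : ℕ}

/-- Box `k` of the row `[ℓ]` after it has been excited `g k` times. -/
def rowBox (g : Fin ℓ → ℕ) (k : Fin ℓ) : ℕ × ℕ := (g k, k + g k)

def rowExcitation (g : Fin ℓ → ℕ) : Finset (ℕ × ℕ) := univ.image (rowBox g)

theorem rowSeg_eq_rowExcitation_zero : rowSeg ℓ = rowExcitation (0 : Fin ℓ → ℕ) := by
  ext x
  simp [rowSeg, rowExcitation, rowBox, Fin.exists_iff, eq_comm]

theorem strictMono_add_of_monotone {g : Fin ℓ → ℕ} (hg : Monotone g) :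
    StrictMono fun k : Fin ℓ => (k : ℕ) + g k :=
  fun _ _ hab => Nat.add_lt_add_of_lt_of_le hab (hg hab.le)

theorem rowBox_injective {g : Fin ℓ → ℕ} (hg : Monotone g) : Injective (rowBox g) :=
  fun _ _ h => (strictMono_add_of_monotone hg).injective (congrArg Prod.snd h)

theorem rowBox_update (g : Fin ℓ → ℕ) (k : Fin ℓ) (v : ℕ) :
    rowBox (update g k v) = update (rowBox g) k (v, k + v) := by
  funext j
  rcases eq_or_ne j k with rfl | hj
  · simp [rowBox]
  · simp [rowBox, hj]

theorem exists_rowExcitation_of_excitedStep {μ : YoungDiagram} {g : Fin ℓ → ℕ}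
    (hg : Monotone g) {F : Finset (ℕ × ℕ)} (hs : ExcitedStep μ (rowExcitation g) F) :
    ∃ g' : Fin ℓ → ℕ, Monotone g' ∧ F = rowExcitation g' := by
  obtain ⟨u, hu, -, -, hright, -, rfl⟩ := hs
  obtain ⟨k, -, rfl⟩ := mem_image.1 hu
  have hgap : ∀ m, k < m → g k < g m := by
    intro m hkm
    let k' : Fin ℓ := ⟨k + 1, by omega⟩
    have hkk' : g k ≠ g k' := fun heq =>
      hright (mem_image.2 ⟨k', mem_univ _, by simp [rowBox, k', heq]; omega⟩)
    exact (lt_of_le_of_ne (hg (Fin.le_def.2 (Nat.le_succ _))) hkk').trans_le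
      (hg (Fin.le_def.2 hkm))
  refine ⟨update g k (g k + 1), ?_, ?_⟩
  · intro a b hab
    simp only [update_apply]
    split_ifs with ha hb hb
    · rfl
    · subst ha; exact hgap b (lt_of_le_of_ne hab (Ne.symm hb))
    · exact (hg hab).trans (hb ▸ Nat.le_succ _)
    · exact hg hab
  · simp only [rowExcitation]
    rw [rowBox_update, image_update_univ_of_injective (rowBox_injective hg)]
    simp only [rowBox, add_assoc]

theorem exists_rowExcitation_of_mem_excitedSet {μ : YoungDiagram} {F : Finset (ℕ × ℕ)}
    (hF : F ∈ excitedSet μ (rowSeg ℓ)) :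
    F ⊆ μ.cells ∧ ∃ g : Fin ℓ → ℕ, Monotone g ∧ F = rowExcitation g := by
  rw [excitedSet, mem_filter, mem_powerset] at hF
  obtain ⟨hsub, hrel⟩ := hF
  refine ⟨hsub, ?_⟩
  clear hsub
  induction hrel with
  | refl => exact ⟨0, fun _ _ _ => le_rfl, rowSeg_eq_rowExcitation_zero⟩
  | tail _ hs ih =>
    obtain ⟨g, hg, rfl⟩ := ih
    exact exists_rowExcitation_of_excitedStep hg hs

theorem image_snd_rowExcitation (g : Fin ℓ → ℕ) :
    (rowExcitation g).image Prod.snd = univ.image fun k : Fin ℓ => (k : ℕ) + g k := by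
  simp [rowExcitation, image_image, comp_def, rowBox]

theorem image_snd_rowExcitation_mem_powersetCard {μ : YoungDiagram} {g : Fin ℓ → ℕ}
    (hg : Monotone g) (hsub : rowExcitation g ⊆ μ.cells) :
    (rowExcitation g).image Prod.snd ∈ powersetCard ℓ (range (ℓ + μ.card / ℓ)) := by
  rw [image_snd_rowExcitation, mem_powersetCard,
    card_image_of_injective _ (strictMono_add_of_monotone hg).injective, card_univ,
    Fintype.card_fin]
  refine ⟨fun c hc => ?_, rfl⟩
  obtain ⟨k, -, rfl⟩ := mem_image.1 hc
  exact mem_range.2 (μ.add_lt_add_card_div_of_mem k.2 (hsub (mem_image_of_mem _ (mem_univ k))))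

theorem eq_of_image_snd_rowExcitation_eq {g g' : Fin ℓ → ℕ} (hg : Monotone g)
    (hg' : Monotone g')
    (h : (rowExcitation g).image Prod.snd = (rowExcitation g').image Prod.snd) : g = g' := by
  rw [image_snd_rowExcitation, image_snd_rowExcitation] at h
  have hrange := congrArg ((↑) : Finset ℕ → Set ℕ) h
  simp only [coe_image, coe_univ, Set.image_univ] at hrange
  have hcol := ((strictMono_add_of_monotone hg).range_inj
    (strictMono_add_of_monotone hg')).1 hrange
  funext k
  have := congrFun hcol k
  omega

end RowExcitation

theorem excitedSet_row_card_le_choose_general (lam : YoungDiagram) (ℓ : ℕ) :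
    (excitedSet lam (rowSeg ℓ)).card ≤ (ℓ + lam.card / ℓ).choose ℓ := by
  calc (excitedSet lam (rowSeg ℓ)).card
      ≤ (powersetCard ℓ (range (ℓ + lam.card / ℓ))).card := by
        refine card_le_card_of_injOn (·.image Prod.snd) (fun F hF => ?_) (fun F hF F' hF' h => ?_)
        · obtain ⟨hsub, g, hg, rfl⟩ := exists_rowExcitation_of_mem_excitedSet hF
          exact image_snd_rowExcitation_mem_powersetCard hg hsub
        · obtain ⟨-, g, hg, rfl⟩ := exists_rowExcitation_of_mem_excitedSet hF
          obtain ⟨-, g', hg', rfl⟩ := exists_rowExcitation_of_mem_excitedSet hF'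
          rw [eq_of_image_snd_rowExcitation_eq hg hg' h]
    _ = (ℓ + lam.card / ℓ).choose ℓ := by simp

/-- The number of excited diagrams of the row `[ℓ]` in `λ` is at most
`C(ℓ + ⌊n/ℓ⌋, ℓ)`, where `n = |λ|`. -/
theorem excitedSet_row_card_le_choose (lam : YoungDiagram) (ℓ : ℕ)
    (h : ℓ ≤ lam.rowLen 0) :
    (excitedSet lam (rowSeg ℓ)).card ≤ (ℓ + lam.card / ℓ).choose ℓ :=
  excitedSet_row_card_le_choose_general lam ℓ
end

section
/- Let λ be a Young diagram with diagonal length δ and ℓ ≤ λ₁. Then the number of excited diagrams of the row [ℓ] in λ is at most C(ℓ + δ, ℓ). -/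
open scoped Classical

/-- Invariant: `F` is the image of `j ↦ (d j, j + d j)` for a weakly increasing `d`,
with all boxes in `lam`. -/
def RowInv (lam : YoungDiagram) (ℓ : ℕ) (F : Finset (ℕ × ℕ)) : Prop :=
  ∃ d : ℕ → ℕ, (∀ j k, j ≤ k → k < ℓ → d j ≤ d k) ∧
    (∀ j < ℓ, (d j, j + d j) ∈ lam) ∧
    F = (Finset.range ℓ).image (fun j => (d j, j + d j))

lemma rowInv_snd_lt {d : ℕ → ℕ} {ℓ : ℕ} (hmono : ∀ j k, j ≤ k → k < ℓ → d j ≤ d k)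
    {j k : ℕ} (hjk : j < k) (hk : k < ℓ) : j + d j < k + d k := by
  have := hmono j k hjk.le hk
  omega

lemma rowInv_step (lam : YoungDiagram) (ℓ : ℕ) {E F : Finset (ℕ × ℕ)}
    (hE : RowInv lam ℓ E) (hstep : ExcitedStep lam E F) : RowInv lam ℓ F := by
  classical
  obtain ⟨d, hmono, hmem, rfl⟩ := hE
  obtain ⟨u, huE, hin, -, hright, -, rfl⟩ := hstep
  rw [Finset.mem_image] at huE
  obtain ⟨j₀, hj₀m, hu⟩ := huE
  rw [Finset.mem_range] at hj₀m
  subst hu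
  set d' : ℕ → ℕ := Function.update d j₀ (d j₀ + 1) with hd'
  have hd'j₀ : d' j₀ = d j₀ + 1 := Function.update_self _ _ _
  have hd'ne : ∀ k, k ≠ j₀ → d' k = d k := fun k hk => Function.update_of_ne hk _ _
  have hkey : j₀ + 1 < ℓ → d j₀ < d (j₀ + 1) := by
    intro hlt
    by_contra hcon
    push_neg at hcon
    have heq : d (j₀ + 1) = d j₀ := le_antisymm hcon (hmono j₀ (j₀ + 1) (by omega) hlt)
    apply hright
    refine Finset.mem_image.mpr ⟨j₀ + 1, Finset.mem_range.mpr hlt, ?_⟩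
    rw [heq, show j₀ + 1 + d j₀ = j₀ + d j₀ + 1 from by omega]
  have hmono' : ∀ j k, j ≤ k → k < ℓ → d' j ≤ d' k := by
    intro j k hjk hk
    by_cases hj : j = j₀ <;> by_cases hk' : k = j₀
    · rw [hj, hk']
    · rw [hj, hd'j₀, hd'ne k hk']
      have hlt : j₀ < k := lt_of_le_of_ne (hj ▸ hjk) (Ne.symm hk')
      have h1 := hkey (by omega)
      have h2 := hmono (j₀ + 1) k (by omega) hk
      omega
    · rw [hk', hd'j₀, hd'ne j hj]
      have := hmono j j₀ (hk' ▸ hjk) (hk' ▸ hk)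
      omega
    · rw [hd'ne j hj, hd'ne k hk']
      exact hmono j k hjk hk
  refine ⟨d', hmono', ?_, ?_⟩
  · intro j hj
    by_cases hjj : j = j₀
    · rw [hjj, hd'j₀, show j₀ + (d j₀ + 1) = j₀ + d j₀ + 1 from by omega]
      exact hin
    · rw [hd'ne j hjj]
      exact hmem j hj
  · ext x
    constructor
    · intro hx
      rcases Finset.mem_insert.mp hx with rfl | hx'
      · refine Finset.mem_image.mpr ⟨j₀, Finset.mem_range.mpr hj₀m, ?_⟩
        rw [hd'j₀, show j₀ + (d j₀ + 1) = j₀ + d j₀ + 1 from by omega]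
      · obtain ⟨hne, hxE⟩ := Finset.mem_erase.mp hx'
        obtain ⟨k, hk, rfl⟩ := Finset.mem_image.mp hxE
        rw [Finset.mem_range] at hk
        have hkne : k ≠ j₀ := by
          rintro rfl
          exact hne rfl
        refine Finset.mem_image.mpr ⟨k, Finset.mem_range.mpr hk, ?_⟩
        rw [hd'ne k hkne]
    · intro hx
      obtain ⟨k, hk, rfl⟩ := Finset.mem_image.mp hx
      rw [Finset.mem_range] at hk
      by_cases hkk : k = j₀
      · subst hkk
        apply Finset.mem_insert.mpr
        left
        rw [hd'j₀, show k + (d k + 1) = k + d k + 1 from by omega]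
      · apply Finset.mem_insert.mpr
        right
        rw [Finset.mem_erase]
        constructor
        · intro heq
          have hsnd : k + d' k = j₀ + d j₀ := congrArg Prod.snd heq
          rw [hd'ne k hkk] at hsnd
          rcases lt_trichotomy k j₀ with hlt | rfl | hlt
          · exact absurd hsnd (rowInv_snd_lt hmono hlt hj₀m).ne
          · exact hkk rfl
          · exact absurd hsnd.symm (rowInv_snd_lt hmono hlt hk).ne
        · rw [hd'ne k hkk]
          exact Finset.mem_image.mpr ⟨k, Finset.mem_range.mpr hk, rfl⟩

lemma rowInv_rtg (lam : YoungDiagram) (ℓ : ℕ) {E F : Finset (ℕ × ℕ)}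
    (hE : RowInv lam ℓ E) (hrel : Relation.ReflTransGen (ExcitedStep lam) E F) :
    RowInv lam ℓ F := by
  induction hrel with
  | refl => exact hE
  | tail _ hstep ih => exact rowInv_step lam ℓ ih hstep

lemma diag_lt (lam : YoungDiagram) {i : ℕ} (hi : (i, i) ∈ lam) : i < diagLen lam := by
  have hcard : i < lam.card := by
    have hsub : (Finset.range (i + 1)).image (fun j => (j, i)) ⊆ lam.cells := by
      intro x hx
      rw [Finset.mem_image] at hx
      obtain ⟨j, hj, rfl⟩ := hx
      rw [Finset.mem_range] at hj
      rw [YoungDiagram.mem_cells]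
      exact lam.up_left_mem (by omega) le_rfl hi
    have hle := Finset.card_le_card hsub
    rw [Finset.card_image_of_injective _ (fun a b hab => (Prod.mk.injEq _ _ _ _ ▸ hab).1),
      Finset.card_range] at hle
    exact lt_of_lt_of_le (Nat.lt_succ_self i) hle
  have hsub : Finset.range (i + 1) ⊆
      (Finset.range lam.card).filter (fun j => (j, j) ∈ lam) := by
    intro j hj
    rw [Finset.mem_range] at hj
    rw [Finset.mem_filter, Finset.mem_range]
    exact ⟨by omega, lam.up_left_mem (by omega) (by omega) hi⟩
  have := Finset.card_le_card hsub
  rw [Finset.card_range] at this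
  unfold diagLen
  omega

/-- The number of excited diagrams of the row `[ℓ]` in `λ` is at most
`C(ℓ + δ, ℓ)`, where `δ` is the diagonal length of `λ`. -/
theorem excitedSet_row_card_le_choose_diag (lam : YoungDiagram) (ℓ : ℕ)
    (h : ℓ ≤ lam.rowLen 0) :
    (excitedSet lam (rowSeg ℓ)).card ≤ (ℓ + diagLen lam).choose ℓ := by
  have hinv : ∀ F ∈ excitedSet lam (rowSeg ℓ), RowInv lam ℓ F := by
    intro F hF
    rw [excitedSet, Finset.mem_filter] at hF
    refine rowInv_rtg lam ℓ ?_ hF.2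
    refine ⟨fun _ => 0, fun _ _ _ _ => le_rfl, fun j hj => ?_, ?_⟩
    · show ((0 : ℕ), j + 0) ∈ lam
      rw [YoungDiagram.mem_iff_lt_rowLen]
      omega
    · simp [rowSeg]
  have hinj : Set.InjOn (fun F : Finset (ℕ × ℕ) => F.image Prod.snd)
      ↑(excitedSet lam (rowSeg ℓ)) := by
    intro F hF F' hF' heq
    obtain ⟨d, hmono, hmem, rfl⟩ := hinv F hF
    obtain ⟨d', hmono', hmem', rfl⟩ := hinv F' hF'
    simp only at heq
    have himg : ∀ (e : ℕ → ℕ), ((Finset.range ℓ).image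
        (fun j => (e j, j + e j))).image Prod.snd =
        (Finset.range ℓ).image (fun j => j + e j) := by
      intro e
      rw [Finset.image_image]
      rfl
    rw [himg d, himg d'] at heq
    have hdd : ∀ j < ℓ, d j = d' j := by
      intro j hj
      set S := (Finset.range ℓ).image (fun j => j + d j) with hS
      have hScard : S.card = ℓ := by
        rw [hS, Finset.card_image_of_injOn, Finset.card_range]
        intro a ha b hb hab
        rw [Finset.mem_coe, Finset.mem_range] at ha hb
        rcases lt_trichotomy a b with hlt | rfl | hlt
        · exact absurd hab (rowInv_snd_lt hmono hlt hb).ne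
        · rfl
        · exact absurd hab.symm (rowInv_snd_lt hmono hlt ha).ne
      have hf : ∀ x : Fin ℓ, (fun x : Fin ℓ => (x : ℕ) + d x) x ∈ S := by
        intro x
        rw [hS, Finset.mem_image]
        exact ⟨x, Finset.mem_range.mpr x.isLt, rfl⟩
      have hf' : ∀ x : Fin ℓ, (fun x : Fin ℓ => (x : ℕ) + d' x) x ∈ S := by
        intro x
        rw [heq, Finset.mem_image]
        exact ⟨x, Finset.mem_range.mpr x.isLt, rfl⟩
      have hsm : StrictMono (fun x : Fin ℓ => (x : ℕ) + d x) :=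
        fun a b hab => rowInv_snd_lt hmono hab b.isLt
      have hsm' : StrictMono (fun x : Fin ℓ => (x : ℕ) + d' x) :=
        fun a b hab => rowInv_snd_lt hmono' hab b.isLt
      have h1 := Finset.orderEmbOfFin_unique hScard hf hsm
      have h2 := Finset.orderEmbOfFin_unique hScard hf' hsm'
      have hfun : (fun x : Fin ℓ => (x : ℕ) + d x) = fun x : Fin ℓ => (x : ℕ) + d' x := by
        rw [h1, h2]
      have := congrFun hfun ⟨j, hj⟩
      simpa using this
    ext x
    simp only [Finset.mem_image, Finset.mem_range]
    constructor
    · rintro ⟨j, hj, rfl⟩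
      exact ⟨j, hj, by rw [hdd j hj]⟩
    · rintro ⟨j, hj, rfl⟩
      exact ⟨j, hj, by rw [hdd j hj]⟩
  have hmaps : ∀ F ∈ excitedSet lam (rowSeg ℓ),
      F.image Prod.snd ∈ (Finset.range (ℓ + diagLen lam)).powersetCard ℓ := by
    intro F hF
    obtain ⟨d, hmono, hmem, rfl⟩ := hinv F hF
    rw [Finset.mem_powersetCard]
    constructor
    · intro x hx
      rw [Finset.mem_image] at hx
      obtain ⟨u, hu, rfl⟩ := hx
      rw [Finset.mem_image] at hu
      obtain ⟨j, hj, rfl⟩ := hu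
      rw [Finset.mem_range] at hj
      have hbox := hmem j hj
      have hdiag : (d j, d j) ∈ lam := lam.up_left_mem le_rfl (by omega) hbox
      have hlt := diag_lt lam hdiag
      rw [Finset.mem_range]
      show j + d j < ℓ + diagLen lam
      omega
    · rw [Finset.image_image]
      have hco : (Prod.snd ∘ fun j => (d j, j + d j)) = fun j => j + d j := rfl
      rw [hco, Finset.card_image_of_injOn, Finset.card_range]
      intro a ha b hb hab
      rw [Finset.mem_coe, Finset.mem_range] at ha hb
      rcases lt_trichotomy a b with hlt | rfl | hlt
      · exact absurd hab (rowInv_snd_lt hmono hlt hb).ne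
      · rfl
      · exact absurd hab.symm (rowInv_snd_lt hmono hlt ha).ne
  calc (excitedSet lam (rowSeg ℓ)).card
      ≤ ((Finset.range (ℓ + diagLen lam)).powersetCard ℓ).card :=
        Finset.card_le_card_of_injOn _ hmaps hinj
    _ = (ℓ + diagLen lam).choose ℓ := by
        rw [Finset.card_powersetCard, Finset.card_range]
end

section
/- Let λ be a Young diagram with n boxes and ℓ with 1 ≤ ℓ ≤ λ₁. Then the number of excited diagrams of the row [ℓ] in λ is at most e^{5√n}. -/
/-!
An excited diagram of the row `[ℓ]` keeps one box on each diagonal `0, …, ℓ - 1`: the `j`-th box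
sits at `(d j, j + d j)` for a weakly increasing displacement `d`, because a box moves only when
the cell to its right is free. Its columns `j + d j` are therefore strictly increasing and
determine it, and they are smaller than `ℓ + ⌊n/ℓ⌋`, since the rectangle spanned by a box
`(i, k)` of `λ` has `(i + 1)(k + 1) ≤ n` boxes. Hence there are at most `C(ℓ + ⌊n/ℓ⌋, ℓ)` excited
diagrams, and `C(a + b, a) a^a b^b ≤ (a + b)^(a + b)` together with `1 + t² ≤ e^{2t}` gives
`C(a + b, a) ≤ e^{4√(ab)}`.
-/

open scoped Classical

open Finset Real

def shiftedRow (ℓ : ℕ) (d : Fin ℓ → ℕ) : Finset (ℕ × ℕ) :=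
  univ.image fun j => (d j, j + d j)

lemma rowSeg_eq_shiftedRow_zero (ℓ : ℕ) : rowSeg ℓ = shiftedRow ℓ 0 := by
  ext ⟨i, k⟩
  simp [rowSeg, shiftedRow, Fin.exists_iff, eq_comm, and_comm]

lemma shiftedRow_box_injective (ℓ : ℕ) (d : Fin ℓ → ℕ) :
    Function.Injective fun j : Fin ℓ => (d j, (j : ℕ) + d j) := by
  intro j k h
  simp only [Prod.mk.injEq] at h
  exact Fin.ext (by omega)

lemma monotone_update_succ {ℓ : ℕ} {d : Fin ℓ → ℕ} (hd : Monotone d) {j : Fin ℓ}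
    (hj : ∀ k, j < k → d j < d k) : Monotone (Function.update d j (d j + 1)) := by
  intro a b hab
  simp only [Function.update_apply]
  split_ifs with ha hb hb
  · exact le_rfl
  · exact hj b (ha ▸ lt_of_le_of_ne hab (Ne.symm (ha ▸ hb)))
  · exact (hd hab).trans (hb ▸ Nat.le_succ _)
  · exact hd hab

lemma ExcitedStep.exists_shiftedRow {μ : YoungDiagram} {ℓ : ℕ} {d : Fin ℓ → ℕ}
    (hd : Monotone d) {F : Finset (ℕ × ℕ)} (h : ExcitedStep μ (shiftedRow ℓ d) F) :
    ∃ d' : Fin ℓ → ℕ, Monotone d' ∧ F = shiftedRow ℓ d' := by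
  obtain ⟨u, hu, -, -, hright, -, rfl⟩ := h
  obtain ⟨j, -, rfl⟩ := mem_image.1 hu
  have hlt : ∀ k, j < k → d j < d k := by
    intro k hjk
    by_contra! hkj
    set j' : Fin ℓ := ⟨j + 1, by omega⟩
    have hj' : d j' = d j :=
      le_antisymm ((hd (show j' ≤ k from Fin.le_iff_val_le_val.2 hjk)).trans hkj)
        (hd (Fin.le_iff_val_le_val.2 (Nat.le_succ _)))
    refine hright (mem_image.2 ⟨j', mem_univ _, ?_⟩)
    rw [hj', Prod.mk.injEq]
    exact ⟨rfl, by simp only [j']; omega⟩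
  refine ⟨Function.update d j (d j + 1), monotone_update_succ hd hlt, ?_⟩
  have hoff : ∀ k ∈ univ.erase j, (d k, (k : ℕ) + d k) =
      (Function.update d j (d j + 1) k, (k : ℕ) + Function.update d j (d j + 1) k) := by
    intro k hk
    rw [Function.update_of_ne (ne_of_mem_erase hk)]
  rw [shiftedRow, ← image_erase (shiftedRow_box_injective ℓ d), image_congr hoff]
  conv_rhs => rw [shiftedRow, ← insert_erase (mem_univ j), image_insert]
  simp [add_assoc]

lemma exists_shiftedRow_of_reflTransGen {μ : YoungDiagram} {ℓ : ℕ} {F : Finset (ℕ × ℕ)}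
    (h : Relation.ReflTransGen (ExcitedStep μ) (rowSeg ℓ) F) :
    ∃ d : Fin ℓ → ℕ, Monotone d ∧ F = shiftedRow ℓ d := by
  induction h with
  | refl => exact ⟨0, monotone_const, rowSeg_eq_shiftedRow_zero ℓ⟩
  | tail _ hstep ih =>
    obtain ⟨d, hd, rfl⟩ := ih
    exact hstep.exists_shiftedRow hd

lemma exists_shiftedRow_of_mem_excitedSet {μ : YoungDiagram} {ℓ : ℕ} {F : Finset (ℕ × ℕ)}
    (hF : F ∈ excitedSet μ (rowSeg ℓ)) :
    ∃ d : Fin ℓ → ℕ, Monotone d ∧ (∀ j, (d j, (j : ℕ) + d j) ∈ μ) ∧ F = shiftedRow ℓ d := by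
  rw [excitedSet, mem_filter, mem_powerset] at hF
  obtain ⟨d, hd, rfl⟩ := exists_shiftedRow_of_reflTransGen hF.2
  exact ⟨d, hd, fun j => hF.1 (mem_image_of_mem _ (mem_univ j)), rfl⟩

lemma image_snd_shiftedRow (ℓ : ℕ) (d : Fin ℓ → ℕ) :
    (shiftedRow ℓ d).image Prod.snd = univ.image fun j : Fin ℓ => (j : ℕ) + d j := by
  rw [shiftedRow, image_image]
  rfl

lemma strictMono_val_add {ℓ : ℕ} {d : Fin ℓ → ℕ} (hd : Monotone d) :
    StrictMono fun j : Fin ℓ => (j : ℕ) + d j :=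
  Fin.val_strictMono.add_monotone hd

lemma eq_of_image_snd_shiftedRow_eq {ℓ : ℕ} {d d' : Fin ℓ → ℕ} (hd : Monotone d)
    (hd' : Monotone d') (h : (shiftedRow ℓ d).image Prod.snd = (shiftedRow ℓ d').image Prod.snd) :
    d = d' := by
  rw [image_snd_shiftedRow, image_snd_shiftedRow] at h
  have hrange := congrArg (fun s : Finset ℕ => (s : Set ℕ)) h
  simp only [coe_image, coe_univ, Set.image_univ] at hrange
  have := ((strictMono_val_add hd).range_inj (strictMono_val_add hd')).1 hrange
  funext j
  simpa using congrFun this j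

lemma YoungDiagram.succ_mul_succ_le_card {μ : YoungDiagram} {i k : ℕ} (h : (i, k) ∈ μ) :
    (i + 1) * (k + 1) ≤ μ.card := by
  have hsub : range (i + 1) ×ˢ range (k + 1) ⊆ μ.cells := by
    rintro ⟨a, b⟩ hab
    rw [mem_product, mem_range, mem_range] at hab
    exact μ.up_left_mem (by omega) (by omega) h
  simpa using card_le_card hsub

lemma YoungDiagram.add_lt_add_card_div {μ : YoungDiagram} {i j ℓ : ℕ} (h : (i, j + i) ∈ μ)
    (hj : j < ℓ) : j + i < ℓ + μ.card / ℓ := by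
  have hcard := YoungDiagram.succ_mul_succ_le_card h
  rcases le_or_gt (i + 1) (μ.card / ℓ) with hi | hi
  · omega
  · have hcard' : μ.card < (i + 1) * ℓ := (Nat.div_lt_iff_lt_mul (by omega)).1 hi
    have : j + i + 1 < ℓ := Nat.lt_of_mul_lt_mul_left (hcard.trans_lt hcard')
    exact (Nat.lt_of_succ_lt this).trans_le (Nat.le_add_right _ _)

lemma card_excitedSet_rowSeg_le (μ : YoungDiagram) (ℓ : ℕ) :
    #(excitedSet μ (rowSeg ℓ)) ≤ (ℓ + μ.card / ℓ).choose ℓ := by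
  rw [← card_range (ℓ + μ.card / ℓ), ← card_powersetCard]
  refine card_le_card_of_injOn (image Prod.snd) ?_ ?_
  · intro F hF
    obtain ⟨d, hd, hmem, rfl⟩ := exists_shiftedRow_of_mem_excitedSet hF
    rw [mem_coe, mem_powersetCard, image_snd_shiftedRow]
    refine ⟨fun c hc => ?_, ?_⟩
    · obtain ⟨j, -, rfl⟩ := mem_image.1 hc
      exact mem_range.2 (YoungDiagram.add_lt_add_card_div (hmem j) j.isLt)
    · rw [card_image_of_injective _ (strictMono_val_add hd).injective, card_univ, Fintype.card_fin]
  · intro F hF G hG h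
    obtain ⟨d, hd, -, rfl⟩ := exists_shiftedRow_of_mem_excitedSet hF
    obtain ⟨d', hd', -, rfl⟩ := exists_shiftedRow_of_mem_excitedSet hG
    rw [eq_of_image_snd_shiftedRow_eq hd hd' h]

lemma one_add_sq_le_exp_two_mul {t : ℝ} (ht : 0 ≤ t) : 1 + t ^ 2 ≤ exp (2 * t) := by
  calc 1 + t ^ 2 ≤ (t + 1) ^ 2 := by nlinarith
    _ ≤ exp t ^ 2 := by gcongr; exact add_one_le_exp t
    _ = exp (2 * t) := by rw [← exp_nat_mul]; norm_num

lemma add_pow_le_pow_mul_exp (a b : ℕ) :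
    ((a : ℝ) + b) ^ a ≤ (a : ℝ) ^ a * exp (2 * √(a * b)) := by
  rcases Nat.eq_zero_or_pos a with rfl | ha
  · simp
  have ha' : (0 : ℝ) < a := by exact_mod_cast ha
  have hbase : (a : ℝ) + b ≤ a * exp (2 * √(b / a)) := by
    have := one_add_sq_le_exp_two_mul (sqrt_nonneg (b / a))
    rw [sq_sqrt (by positivity)] at this
    calc (a : ℝ) + b = a * (1 + b / a) := by field_simp
      _ ≤ a * exp (2 * √(b / a)) := by gcongr
  have hexp : (a : ℝ) * (2 * √(b / a)) = 2 * √(a * b) := by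
    rw [mul_left_comm, ← sqrt_sq ha'.le, ← sqrt_mul (sq_nonneg _), sqrt_sq ha'.le]
    congr 2
    field_simp
  calc ((a : ℝ) + b) ^ a ≤ (a * exp (2 * √(b / a))) ^ a := by gcongr
    _ = (a : ℝ) ^ a * exp (2 * √(a * b)) := by rw [mul_pow, ← exp_nat_mul, hexp]

lemma choose_mul_pow_mul_pow_le_add_pow (a b : ℕ) :
    (a + b).choose a * a ^ a * b ^ b ≤ (a + b) ^ (a + b) := by
  rw [add_pow]
  calc (a + b).choose a * a ^ a * b ^ b = a ^ a * b ^ (a + b - a) * (a + b).choose a := by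
        rw [Nat.add_sub_cancel_left]; ring
    _ ≤ _ := single_le_sum (f := fun m => a ^ m * b ^ (a + b - m) * (a + b).choose m)
        (fun _ _ => Nat.zero_le _) (mem_range.2 (by omega))

lemma choose_add_le_exp (a b : ℕ) : ((a + b).choose a : ℝ) ≤ exp (4 * √(a * b)) := by
  have hpos : (0 : ℝ) < (a : ℝ) ^ a * (b : ℝ) ^ b := by
    exact_mod_cast Nat.mul_pos Nat.pow_self_pos Nat.pow_self_pos
  have hprod : ((a + b).choose a : ℝ) * ((a : ℝ) ^ a * (b : ℝ) ^ b) ≤ ((a : ℝ) + b) ^ (a + b) := by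
    rw [← mul_assoc]; exact_mod_cast choose_mul_pow_mul_pow_le_add_pow a b
  have hsplit : ((a : ℝ) + b) ^ (a + b) ≤ ((a : ℝ) ^ a * (b : ℝ) ^ b) * exp (4 * √(a * b)) := by
    have hb := add_pow_le_pow_mul_exp b a
    rw [add_comm (b : ℝ), mul_comm (b : ℝ)] at hb
    calc ((a : ℝ) + b) ^ (a + b) = ((a : ℝ) + b) ^ a * ((a : ℝ) + b) ^ b := pow_add _ _ _
      _ ≤ ((a : ℝ) ^ a * exp (2 * √(a * b))) * ((b : ℝ) ^ b * exp (2 * √(a * b))) :=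
        mul_le_mul (add_pow_le_pow_mul_exp a b) hb (by positivity) (by positivity)
      _ = _ := by rw [show (4 : ℝ) * √(a * b) = 2 * √(a * b) + 2 * √(a * b) by ring, exp_add]; ring
  exact le_of_mul_le_mul_right (hprod.trans (hsplit.trans_eq (mul_comm _ _))) hpos

theorem excitedSet_row_card_le_exp_general (lam : YoungDiagram) (ℓ : ℕ) :
    ((excitedSet lam (rowSeg ℓ)).card : ℝ) ≤ Real.exp (5 * Real.sqrt lam.card) := by
  have hprod : ((ℓ : ℝ) * (lam.card / ℓ : ℕ)) ≤ lam.card := by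
    exact_mod_cast Nat.mul_div_le lam.card ℓ
  calc ((excitedSet lam (rowSeg ℓ)).card : ℝ) ≤ ((ℓ + lam.card / ℓ).choose ℓ : ℕ) := by
        exact_mod_cast card_excitedSet_rowSeg_le lam ℓ
    _ ≤ exp (4 * √(ℓ * (lam.card / ℓ : ℕ))) := by exact_mod_cast choose_add_le_exp _ _
    _ ≤ exp (4 * √lam.card) := by gcongr
    _ ≤ exp (5 * √lam.card) := by gcongr; norm_num

/-- For `1 ≤ ℓ ≤ λ₁`, the number of excited diagrams of the row `[ℓ]` in `λ`
is at most `e^{5√n}`, where `n = |λ|`. -/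
theorem excitedSet_row_card_le_exp (lam : YoungDiagram) (ℓ : ℕ)
    (h1 : 1 ≤ ℓ) (h : ℓ ≤ lam.rowLen 0) :
    ((excitedSet lam (rowSeg ℓ)).card : ℝ) ≤ Real.exp (5 * Real.sqrt lam.card) :=
  excitedSet_row_card_le_exp_general lam ℓ
end

section
/- For every α > 0, the sum Σ_{j≥2} (α/j)^{j/2} ≤ e^{8α} − 1. -/
/-!
Write `(α / j) ^ (j / 2) = √(α / j) ^ j`. For `α ≤ 1` and `j ≥ 2` this is at most `α · √(1/2) ^ j`,
a geometric series of sum `≤ 8α ≤ e^{8α} - 1`. For `α ≥ 1`, `j! ≤ j ^ j` bounds it by `√(α ^ j / j!)`,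
and AM-GM applied to `α ^ j / j! = ((2α) ^ j / j!) · (1/2) ^ j` bounds it by half the sum of an
exponential and a geometric term, so the series is at most `(e^{2α} + 2) / 2 ≤ e^{8α} - 1`.
-/

open Real Nat

lemma Real.rpow_natCast_div_two {x : ℝ} (hx : 0 ≤ x) (n : ℕ) : x ^ ((n : ℝ) / 2) = √x ^ n := by
  rw [sqrt_eq_rpow, ← rpow_natCast, ← rpow_mul hx]
  ring_nf

lemma Real.sqrt_pow {x : ℝ} (hx : 0 ≤ x) (n : ℕ) : √(x ^ n) = √x ^ n := by
  rw [← sqrt_sq (by positivity : 0 ≤ √x ^ n), ← pow_mul, mul_comm, pow_mul, sq_sqrt hx]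

lemma Real.sqrt_mul_le_add_div_two {x y : ℝ} (hx : 0 ≤ x) (hy : 0 ≤ y) :
    √(x * y) ≤ (x + y) / 2 :=
  sqrt_le_iff.mpr ⟨by positivity, by nlinarith [sq_nonneg (x - y)]⟩

lemma tsum_le_of_nonneg_of_le_of_hasSum {ι : Type*} {f g : ι → ℝ} {b : ℝ} (hf : ∀ i, 0 ≤ f i)
    (hfg : ∀ i, f i ≤ g i) (hg : HasSum g b) : ∑' i, f i ≤ b :=
  hasSum_le hfg (hg.summable.of_nonneg_of_le hf hfg).hasSum hg

lemma Real.hasSum_pow_div_factorial (x : ℝ) : HasSum (fun n : ℕ ↦ x ^ n / n !) (exp x) :=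
  exp_eq_exp_ℝ ▸ NormedSpace.expSeries_div_hasSum_exp x

section

variable {α : ℝ}

lemma sqrt_div_pow_le_of_le_one (h₀ : 0 ≤ α) (h₁ : α ≤ 1) {j : ℕ} (hj : 2 ≤ j) :
    √(α / j) ^ j ≤ α * √(1 / 2) ^ j :=
  calc √(α / j) ^ j ≤ √(α / 2) ^ j := by
        gcongr
        exact_mod_cast hj
    _ = √α ^ j * √(1 / 2) ^ j := by rw [← mul_pow, ← sqrt_mul h₀]; ring_nf
    _ ≤ √α ^ 2 * √(1 / 2) ^ j := by
        gcongr ?_ * _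
        exact pow_le_pow_of_le_one (sqrt_nonneg α) (sqrt_le_one.mpr h₁) hj
    _ = α * √(1 / 2) ^ j := by rw [sq_sqrt h₀]

lemma sqrt_div_pow_le (h₀ : 0 ≤ α) (j : ℕ) :
    √(α / j) ^ j ≤ ((2 * α) ^ j / j ! + (1 / 2) ^ j) / 2 :=
  calc √(α / j) ^ j = √((α / j) ^ j) := (sqrt_pow (by positivity) j).symm
    _ ≤ √((2 * α) ^ j / j ! * (1 / 2) ^ j) := by
        gcongr
        calc (α / j) ^ j = α ^ j / (j : ℝ) ^ j := div_pow ..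
          _ ≤ α ^ j / j ! := by gcongr; exact_mod_cast factorial_le_pow j
          _ = (2 * α) ^ j / j ! * (1 / 2) ^ j := by
              rw [div_mul_eq_mul_div, mul_pow, mul_right_comm, ← mul_pow]; norm_num
    _ ≤ ((2 * α) ^ j / j ! + (1 / 2) ^ j) / 2 :=
        sqrt_mul_le_add_div_two (by positivity) (by positivity)

lemma tsum_ite_rpow_half_le {g : ℕ → ℝ} {b : ℝ} (h₀ : 0 ≤ α) (hg : HasSum g b)
    (hg₀ : ∀ j, 0 ≤ g j) (hle : ∀ j : ℕ, 2 ≤ j → √(α / j) ^ j ≤ g j) :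
    ∑' j : ℕ, (if 2 ≤ j then (α / j) ^ ((j : ℝ) / 2) else 0) ≤ b := by
  refine tsum_le_of_nonneg_of_le_of_hasSum (fun j ↦ ?_) (fun j ↦ ?_) hg
  · split_ifs <;> positivity
  · split_ifs with hj
    · rw [rpow_natCast_div_two (by positivity)]
      exact hle j hj
    · exact hg₀ j

end

/-- For every `α > 0`, `Σ_{j ≥ 2} (α/j)^{j/2} ≤ e^{8α} − 1`. -/
theorem sum_pow_half_le (α : ℝ) (hα : 0 < α) :
    ∑' j : ℕ, (if 2 ≤ j then (α / j) ^ ((j : ℝ) / 2) else 0)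
      ≤ Real.exp (8 * α) - 1 := by
  rcases le_or_gt α 1 with hα₁ | hα₁
  · have hr : √(1 / 2) ≤ 7 / 8 := sqrt_le_iff.mpr ⟨by norm_num, by norm_num⟩
    have hgeom := (hasSum_geometric_of_lt_one (sqrt_nonneg (1 / 2)) (by linarith)).mul_left α
    calc _ ≤ α * (1 - √(1 / 2))⁻¹ := tsum_ite_rpow_half_le hα.le hgeom (fun j ↦ by positivity)
            fun j hj ↦ sqrt_div_pow_le_of_le_one hα.le hα₁ hj
      _ ≤ α * 8 := by gcongr; exact inv_le_of_inv_le₀ (by norm_num) (by linarith)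
      _ ≤ exp (8 * α) - 1 := by linarith [add_one_le_exp (8 * α)]
  · have hsum := ((hasSum_pow_div_factorial (2 * α)).add hasSum_geometric_two).div_const 2
    calc _ ≤ (exp (2 * α) + 2) / 2 := tsum_ite_rpow_half_le hα.le hsum (fun j ↦ by positivity)
            fun j _ ↦ sqrt_div_pow_le hα.le j
      _ ≤ exp (8 * α) - 1 := by
          linarith [exp_le_exp.mpr (by linarith : 2 * α ≤ 8 * α), add_one_le_exp (8 * α)]
end

section
/- Let λ ⊢ n be a Young diagram with first row of length λ₁ ≥ k, and let u_i denote the number of boxes in column i of λ strictly above the first row, with u_{≤k−1} = Σ_{i=1}^{k−1} u_i. Then H(λ,[k−1]) · (λ₁ − (k−1) − u_{≤k−1}) ≤ λ₁^{↓k}, where H(λ,[k−1]) = Π_{i=1}^{k−1}(λ₁ − (i−1) + u_i) is the product of hook lengths of the first k−1 boxes of the first row. -/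
open scoped Classical

lemma key_absorb (m B : ℤ) (u : ℕ → ℤ) :
    ∀ t : ℕ, (∀ i < t, 0 ≤ u i) → ((t : ℤ) ≤ m) → (B ≤ m - t + 1) →
    (∏ i ∈ Finset.range t, (m - i + u i)) * (B - ∑ i ∈ Finset.range t, u i)
      ≤ (∏ i ∈ Finset.range t, (m - i)) * B := by
  intro t
  induction t with
  | zero => simp
  | succ t ih =>
    intro hu hm hB
    have hut : 0 ≤ u t := hu t (Nat.lt_succ_self t)
    have hmt : (t : ℤ) ≤ m := by push_cast at hm ⊢; linarith
    have hB' : B ≤ m - t := by push_cast at hB ⊢; linarith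
    rw [Finset.prod_range_succ, Finset.prod_range_succ, Finset.sum_range_succ]
    set S := ∑ i ∈ Finset.range t, u i with hS
    have hSnn : 0 ≤ S := Finset.sum_nonneg fun i hi => hu i (lt_trans (Finset.mem_range.mp hi) (Nat.lt_succ_self t))
    -- step: (m - t + u t) * (B - S - u t) ≤ (m - t) * (B - S)
    have step : (m - t + u t) * (B - S - u t) ≤ (m - t) * (B - S) := by nlinarith
    have hprod_nn : 0 ≤ ∏ i ∈ Finset.range t, (m - i + u i) := by
      apply Finset.prod_nonneg
      intro i hi
      have hi' := Finset.mem_range.mp hi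
      have : (i : ℤ) ≤ m := by
        have : (i : ℤ) < t + 1 := by exact_mod_cast Nat.lt_succ_of_lt hi'
        linarith
      have := hu i (lt_trans hi' (Nat.lt_succ_self t))
      linarith
    calc (∏ i ∈ Finset.range t, (m - i + u i)) * (m - t + u t) * (B - (S + u t))
        = (∏ i ∈ Finset.range t, (m - i + u i)) * (m - t + u t) * (B - S - u t) := by ring
      _
        = (∏ i ∈ Finset.range t, (m - i + u i)) * ((m - t + u t) * (B - S - u t)) := by ring
      _ ≤ (∏ i ∈ Finset.range t, (m - i + u i)) * ((m - t) * (B - S)) :=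
          mul_le_mul_of_nonneg_left step hprod_nn
      _ = (∏ i ∈ Finset.range t, (m - i + u i)) * (B - S) * (m - t) := by ring
      _ ≤ (∏ i ∈ Finset.range t, (m - i)) * B * (m - t) := by
          apply mul_le_mul_of_nonneg_right
          · exact ih (fun i hi => hu i (lt_trans hi (Nat.lt_succ_self t))) hmt (by linarith)
          · linarith
      _ = (∏ i ∈ Finset.range t, (m - i)) * (m - t) * B := by ring

/-- Monotonicity bound for the first-row hook product: for `λ ⊢ n` with
`λ₁ ≥ k ≥ 2`, writing `uᵢ` for the number of boxes of column `i` strictly above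
the first row, `H(λ,[k−1]) · (λ₁ − (k−1) − u_{≤k−1}) ≤ λ₁^{↓k}`. -/
theorem hook_prod_first_row_le_descFactorial (n k : ℕ) (hk : 2 ≤ k)
    (lam : YoungDiagram) (hcard : lam.card = n) (hk1 : k ≤ lam.rowLen 0) :
    (∏ i ∈ Finset.range (k - 1),
          ((lam.rowLen 0 : ℤ) - (i : ℤ) + ((lam.colLen i : ℤ) - 1))) *
        ((lam.rowLen 0 : ℤ) - ((k : ℤ) - 1) -
          ∑ i ∈ Finset.range (k - 1), ((lam.colLen i : ℤ) - 1))
      ≤ ((lam.rowLen 0).descFactorial k : ℤ) := by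
  set m := lam.rowLen 0 with hm
  have hk1' : 1 ≤ k := le_trans (by norm_num) hk
  have hmain := key_absorb (m : ℤ) ((m : ℤ) - ((k : ℤ) - 1))
    (fun i => (lam.colLen i : ℤ) - 1) (k - 1)
    (fun i hi => by
      have hmem : (0, i) ∈ lam := by
        rw [YoungDiagram.mem_iff_lt_rowLen]
        exact lt_of_lt_of_le (lt_of_lt_of_le hi (Nat.sub_le k 1)) hk1
      have : 1 ≤ lam.colLen i := by
        rw [Nat.one_le_iff_ne_zero]
        intro h
        have := (YoungDiagram.mem_iff_lt_colLen).mp hmem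
        omega
      have h1 : (1 : ℤ) ≤ (lam.colLen i : ℤ) := by exact_mod_cast this
      show (0:ℤ) ≤ (lam.colLen i : ℤ) - 1
      linarith)
    (by
      have : k - 1 ≤ m := le_trans (Nat.sub_le k 1) hk1
      exact_mod_cast this)
    (by
      have hcast : ((k - 1 : ℕ) : ℤ) = (k : ℤ) - 1 := by
        have := hk1'; push_cast [this]; ring
      rw [hcast]; linarith)
  have hcast : ((k - 1 : ℕ) : ℤ) = (k : ℤ) - 1 := by
    have := hk1'; push_cast [this]; ring
  refine le_trans hmain ?_
  have hdesc : ((m.descFactorial k : ℕ) : ℤ) = ∏ i ∈ Finset.range k, ((m : ℤ) - i) := by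
    rw [Nat.descFactorial_eq_prod_range, Nat.cast_prod]
    exact Finset.prod_congr rfl fun i hi => by
      rw [Nat.cast_sub (le_of_lt (lt_of_lt_of_le (Finset.mem_range.mp hi) hk1))]
  rw [hdesc]
  have hksplit : k = (k - 1) + 1 := by omega
  rw [hksplit, Finset.prod_range_succ, hcast]
  rw [← hksplit]
end

section
/- Let n, k, t be integers with 2 ≤ k ≤ n, t ≥ 2 and kt ≤ n/2. Let S(1),…,S(t) be i.i.d. uniformly random k-element subsets of {1,…,n}. Then the number of repetitions M = Σ_{i=2}^t |(S(1)∪…∪S(i−1)) ∩ S(i)| is stochastically dominated by a Bin(kt, 2kt/n) random variable. -/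
/-!
Reveal the sets one at a time and let `p = 2kt/n`. Whatever the first sets are, their union `U`
has at most `kt` elements, and the repetitions contributed by the next set are `|U ∩ S|` for a
uniform `k`-set `S`: a hypergeometric variable. Drawing the `k` elements of `S` one after the other
without replacement, each draw lands in `U` with probability at most
`|U| / (n - k + 1) ≤ kt / (n / 2) = p`, so `|U ∩ S| ⪯ Bin(k, p)`. Domination by binomials is
stable under such sequential sums: if `X ⪯ Bin(N, p)` and, conditionally on `X`, the increment is
dominated by `Bin(K, p)`, then the total is dominated by `Bin(N + K, p)`. Both facts reduce, by
induction on the number of trials, to the recursion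
`P(Bin(N + 1, p) ≥ x) = (1 - p) P(Bin(N, p) ≥ x) + p P(Bin(N, p) ≥ x - 1)`.
-/

open MeasureTheory ProbabilityTheory

/-- The discrete `σ`-algebra on finite sets of labels. -/
instance (α : Type*) : MeasurableSpace (Finset α) := ⊤

open Finset

noncomputable def binomialTail (p : ℝ) (N x : ℕ) : ℝ :=
  ∑ j ∈ Icc x N, (N.choose j : ℝ) * p ^ j * (1 - p) ^ (N - j)

section BinomialTail

variable {p : ℝ}

theorem binomialTail_eq_sum_range (N x : ℕ) :
    binomialTail p N x =
      ∑ j ∈ range (N + 1), (N.choose j : ℝ) * (if x ≤ j then p ^ j * (1 - p) ^ (N - j) else 0) := by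
  have : Icc x N = {j ∈ range (N + 1) | x ≤ j} := by ext; simp [and_comm]
  simp only [binomialTail, this, sum_filter, mul_ite, mul_zero, mul_assoc]

theorem binomialTail_zero (x : ℕ) : binomialTail p 0 x = if x = 0 then 1 else 0 := by
  simp [binomialTail_eq_sum_range]

theorem binomialTail_succ (N x : ℕ) :
    binomialTail p (N + 1) x = (1 - p) * binomialTail p N x + p * binomialTail p N (x - 1) := by
  rw [binomialTail_eq_sum_range, binomialTail_eq_sum_range, binomialTail_eq_sum_range,
    sum_choose_succ_mul (fun j l => if x ≤ j then p ^ j * (1 - p) ^ l else 0), mul_sum, mul_sum]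
  congr 1 <;> refine sum_congr rfl fun j hj => ?_
  · rw [mem_range] at hj
    rw [Nat.succ_sub (by omega), pow_succ]
    split_ifs <;> ring
  · simp only [show x ≤ j + 1 ↔ x - 1 ≤ j by omega]
    split_ifs <;> ring

theorem sum_binomialTail_sub_le (hp0 : 0 ≤ p) (hp1 : p ≤ 1) {ι : Type*} (s : Finset ι)
    (X : ι → ℕ) {c : ℝ} {N : ℕ} (hX : ∀ m, (#{i ∈ s | m ≤ X i} : ℝ) ≤ c * binomialTail p N m)
    (K x : ℕ) : ∑ i ∈ s, binomialTail p K (x - X i) ≤ c * binomialTail p (N + K) x := by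
  induction K generalizing x with
  | zero => simpa [binomialTail_zero, Nat.sub_eq_zero_iff_le] using hX x
  | succ K ih =>
    simp only [binomialTail_succ, ← add_assoc, sum_add_distrib, ← mul_sum,
      Nat.sub_right_comm x _ 1]
    calc (1 - p) * ∑ i ∈ s, binomialTail p K (x - X i) +
          p * ∑ i ∈ s, binomialTail p K (x - 1 - X i)
        ≤ (1 - p) * (c * binomialTail p (N + K) x) +
          p * (c * binomialTail p (N + K) (x - 1)) := by
          gcongr
          exacts [ih x, ih (x - 1)]
      _ = c * ((1 - p) * binomialTail p (N + K) x + p * binomialTail p (N + K) (x - 1)) := by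
          ring

end BinomialTail

section Hypergeometric

variable {α : Type*} [Fintype α] [DecidableEq α]

theorem sum_powersetCard_sum_compl_insert {M : Type*} [AddCommMonoid M] (f : Finset α → M)
    (k : ℕ) :
    ∑ s ∈ powersetCard k univ, ∑ a ∈ sᶜ, f (insert a s) =
      (k + 1) • ∑ s ∈ powersetCard (k + 1) univ, f s := by
  have hcard : ∀ s ∈ powersetCard (k + 1) (univ : Finset α), (k + 1) • f s = ∑ _a ∈ s, f s := by
    intro s hs
    rw [sum_const, mem_powersetCard_univ.1 hs]
  rw [smul_sum, sum_congr rfl hcard, sum_sigma', sum_sigma']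
  refine sum_bij' (fun x _ => ⟨insert x.2 x.1, x.2⟩) (fun y _ => ⟨y.1.erase y.2, y.2⟩)
    ?_ ?_ ?_ ?_ fun _ _ => rfl
  all_goals rintro ⟨s, a⟩ h; simp_all [card_insert_of_notMem, card_erase_of_mem]

/-- One more draw without replacement: adding `a ∉ s` raises `#(A ∩ s)` by one exactly when
`a ∈ A`, which happens for at most `#A ≤ p * #sᶜ` of the `#sᶜ` choices of `a`. -/
theorem card_filter_compl_insert_le {p : ℝ} (A s : Finset α) (m : ℕ)
    (hA : (#A : ℝ) ≤ p * #sᶜ) :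
    (#{a ∈ sᶜ | m ≤ #(A ∩ insert a s)} : ℝ) ≤
      #sᶜ * ((1 - p) * (if m ≤ #(A ∩ s) then 1 else 0) +
        p * (if m - 1 ≤ #(A ∩ s) then 1 else 0)) := by
  have hge : ∀ a, #(A ∩ s) ≤ #(A ∩ insert a s) := fun a =>
    card_le_card (inter_subset_inter_left (subset_insert a s))
  have hle : ∀ a, #(A ∩ insert a s) ≤ #(A ∩ s) + 1 := fun a => by
    by_cases ha : a ∈ A
    · rw [inter_insert_of_mem ha]; exact card_insert_le _ _
    · rw [inter_insert_of_notMem ha]; omega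
  rcases le_or_gt m #(A ∩ s) with hm | hm
  · rw [filter_true_of_mem fun a _ => hm.trans (hge a)]
    simp [hm, (Nat.sub_le m 1).trans hm]
  rcases eq_or_lt_of_le (Nat.succ_le_of_lt hm) with hm' | hm'
  · have hsub : {a ∈ sᶜ | m ≤ #(A ∩ insert a s)} ⊆ A := by
      intro a ha
      rw [mem_filter] at ha
      by_contra haA
      rw [inter_insert_of_notMem haA] at ha
      omega
    rw [if_neg (by omega), if_pos (by omega)]
    linarith [(Nat.cast_le (α := ℝ)).2 (card_le_card hsub)]
  · rw [filter_false_of_mem fun a _ => by have := hle a; omega]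
    simp [hm.not_ge, show ¬ m - 1 ≤ #(A ∩ s) by omega]

theorem card_filter_powersetCard_le_choose_mul_binomialTail {p : ℝ} (hp0 : 0 ≤ p) (hp1 : p ≤ 1)
    (A : Finset α) {k : ℕ} (hk : k ≤ Fintype.card α)
    (hA : (#A : ℝ) ≤ p * (Fintype.card α - k + 1)) (m : ℕ) :
    (#{S ∈ powersetCard k univ | m ≤ #(A ∩ S)} : ℝ) ≤
      (Fintype.card α).choose k * binomialTail p k m := by
  set n := Fintype.card α
  induction k generalizing m with
  | zero =>
    rw [powersetCard_zero, binomialTail_zero]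
    by_cases hm : m = 0 <;> simp [hm, Nat.pos_iff_ne_zero]
  | succ k ih =>
    have hnk : ((n - k : ℕ) : ℝ) = n - k := Nat.cast_sub (by omega)
    have hA' : (#A : ℝ) ≤ p * (n - k + 1) := hA.trans (by push_cast; nlinarith)
    have hchoose : ((n - k : ℕ) : ℝ) * n.choose k = (k + 1 : ℕ) * n.choose (k + 1) := by
      rw [mul_comm, mul_comm ((k + 1 : ℕ) : ℝ)]
      exact_mod_cast (Nat.choose_succ_right_eq n k).symm
    refine le_of_mul_le_mul_left ?_ (by positivity : (0 : ℝ) < (k + 1 : ℕ))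
    calc ((k + 1 : ℕ) : ℝ) * #{S ∈ powersetCard (k + 1) univ | m ≤ #(A ∩ S)}
        = ∑ s ∈ powersetCard k univ, (#{a ∈ sᶜ | m ≤ #(A ∩ insert a s)} : ℝ) := by
          simpa using (sum_powersetCard_sum_compl_insert
            (fun S => if m ≤ #(A ∩ S) then (1 : ℝ) else 0) k).symm
      _ ≤ ∑ s ∈ powersetCard k univ, ((n - k : ℕ) : ℝ) *
            ((1 - p) * (if m ≤ #(A ∩ s) then 1 else 0) +
              p * (if m - 1 ≤ #(A ∩ s) then 1 else 0)) := sum_le_sum fun s hs => by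
          have hs : #sᶜ = n - k := by rw [card_compl, mem_powersetCard_univ.1 hs]
          refine hs ▸ card_filter_compl_insert_le A s m ?_
          rw [hs, hnk]; push_cast at hA; linarith
      _ = ((n - k : ℕ) : ℝ) * ((1 - p) * #{s ∈ powersetCard k univ | m ≤ #(A ∩ s)} +
            p * #{s ∈ powersetCard k univ | m - 1 ≤ #(A ∩ s)}) := by
          simp only [← mul_sum, sum_add_distrib, sum_boole]
      _ ≤ ((n - k : ℕ) : ℝ) * ((1 - p) * (n.choose k * binomialTail p k m) +
            p * (n.choose k * binomialTail p k (m - 1))) := by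
          gcongr
          exacts [ih m (by omega) hA', ih (m - 1) (by omega) hA']
      _ = ((k + 1 : ℕ) : ℝ) * (n.choose (k + 1) * binomialTail p (k + 1) m) := by
          rw [binomialTail_succ]
          linear_combination ((1 - p) * binomialTail p k m + p * binomialTail p k (m - 1)) * hchoose

end Hypergeometric

theorem card_filter_piFinset_eq_sum_snoc {β : Type*} {s : ℕ} (t : Finset β)
    (P : (Fin (s + 1) → β) → Prop) [DecidablePred P] :
    #{A ∈ Fintype.piFinset fun _ => t | P A} =
      ∑ B ∈ Fintype.piFinset fun _ => t, #{c ∈ t | P (Fin.snoc B c)} := by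
  have h := filter_piFinset_eq_map_snocEquiv (fun _ : Fin (s + 1) => t) fun _ => True
  simp only [filter_true] at h
  rw [h, filter_map, card_map, card_filter, sum_product_right]
  simp only [card_filter]
  rfl

section Repetitions

variable {α : Type*} [DecidableEq α]

def repetitions {s : ℕ} (A : Fin s → Finset α) : ℕ :=
  ∑ i, #((univ.filter fun j => j < i).biUnion A ∩ A i)

theorem biUnion_filter_lt_snoc {s : ℕ} (B : Fin s → Finset α) (c : Finset α) (i : Fin (s + 1)) :
    (univ.filter fun j => j < i).biUnion (Fin.snoc B c : Fin (s + 1) → Finset α) =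
      (univ.filter fun j : Fin s => j.castSucc < i).biUnion B := by
  ext a
  simp only [mem_biUnion, mem_filter, mem_univ, true_and]
  constructor
  · rintro ⟨j, hj, ha⟩
    obtain ⟨j, rfl⟩ := Fin.exists_castSucc_eq.2 (Fin.ne_last_of_lt hj)
    exact ⟨j, hj, by simpa using ha⟩
  · rintro ⟨j, hj, ha⟩
    exact ⟨j.castSucc, hj, by simpa using ha⟩

theorem repetitions_snoc {s : ℕ} (B : Fin s → Finset α) (c : Finset α) :
    repetitions (Fin.snoc B c : Fin (s + 1) → Finset α) =
      repetitions B + #(univ.biUnion B ∩ c) := by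
  simp [repetitions, Fin.sum_univ_castSucc, biUnion_filter_lt_snoc, Fin.castSucc_lt_last]

theorem card_filter_le_repetitions_le [Fintype α] {p : ℝ} (hp0 : 0 ≤ p) (hp1 : p ≤ 1)
    {k s : ℕ} (hk : k ≤ Fintype.card α) (hks : (k * s : ℝ) ≤ p * (Fintype.card α - k + 1))
    (x : ℕ) :
    (#{A ∈ Fintype.piFinset fun _ : Fin s => powersetCard k (univ : Finset α) |
        x ≤ repetitions A} : ℝ) ≤
      (Fintype.card α).choose k ^ s * binomialTail p (k * s) x := by
  induction s generalizing x with
  | zero =>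
    rw [Nat.mul_zero, binomialTail_zero]
    by_cases hx : x = 0 <;> simp [hx, repetitions]
  | succ s ih =>
    have hks' : (k * s : ℝ) ≤ p * (Fintype.card α - k + 1) :=
      le_trans (by push_cast; nlinarith) hks
    have hunion : ∀ B ∈ Fintype.piFinset fun _ : Fin s => powersetCard k (univ : Finset α),
        (#(univ.biUnion B) : ℝ) ≤ p * (Fintype.card α - k + 1) := fun B hB => by
      refine le_trans ?_ hks'
      have := card_biUnion_le (s := univ) (t := B)
      simp only [Fintype.mem_piFinset, mem_powersetCard_univ] at hB
      simp only [hB, sum_const, card_univ, Fintype.card_fin, smul_eq_mul] at this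
      rw [mul_comm]; exact_mod_cast this
    rw [card_filter_piFinset_eq_sum_snoc]
    simp only [repetitions_snoc, ← Nat.sub_le_iff_le_add']
    push_cast
    calc ∑ B ∈ Fintype.piFinset fun _ : Fin s => powersetCard k (univ : Finset α),
          (#{c ∈ powersetCard k univ | x - repetitions B ≤ #(univ.biUnion B ∩ c)} : ℝ)
        ≤ ∑ B ∈ Fintype.piFinset fun _ : Fin s => powersetCard k (univ : Finset α),
          (Fintype.card α).choose k * binomialTail p k (x - repetitions B) :=
          sum_le_sum fun B hB =>
            card_filter_powersetCard_le_choose_mul_binomialTail hp0 hp1 _ hk (hunion B hB) _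
      _ ≤ (Fintype.card α).choose k *
            ((Fintype.card α).choose k ^ s * binomialTail p (k * s + k) x) := by
          rw [← mul_sum]
          gcongr
          exact sum_binomialTail_sub_le hp0 hp1 _ _ (ih hks') k x
      _ = (Fintype.card α).choose k ^ (s + 1) * binomialTail p (k * (s + 1)) x := by
          rw [Nat.mul_succ]; ring

end Repetitions

instance {α : Type*} : MeasurableSingletonClass (Finset α) := ⟨fun _ => trivial⟩

theorem ProbabilityTheory.iIndepFun.measure_setOf_le_sum_prod {Ω ι β : Type*}
    [MeasurableSpace Ω] {P : Measure Ω} [Fintype ι] [DecidableEq ι] [Fintype β]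
    [MeasurableSpace β] [MeasurableSingletonClass β] {S : ι → Ω → β}
    (hS : iIndepFun S P) (Q : (ι → β) → Prop) [DecidablePred Q] :
    P {ω | Q fun i => S i ω} ≤ ∑ A ∈ univ.filter Q, ∏ i, P (S i ⁻¹' {A i}) := by
  have hset : {ω | Q fun i => S i ω} = ⋃ A ∈ univ.filter Q, ⋂ i ∈ univ, S i ⁻¹' {A i} := by
    ext ω; simp [← funext_iff]
  rw [hset]
  refine (measure_biUnion_finset_le _ _).trans_eq (sum_congr rfl fun A _ => ?_)
  exact hS.measure_inter_preimage_eq_mul _ fun i _ => measurableSet_singleton _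

theorem sum_prod_ite_eq_card_filter_mul_pow {ι β R : Type*} [Fintype ι] [CommSemiring R]
    (T : Finset (ι → β)) (q : β → Prop) [DecidablePred q] (a : R) :
    ∑ A ∈ T, ∏ i, (if q (A i) then a else 0) = #{A ∈ T | ∀ i, q (A i)} * a ^ Fintype.card ι := by
  simp [Fintype.prod_ite_zero, ← sum_filter]

theorem mul_le_two_mul_div_mul_sub_add_one {n k t : ℕ} (hkt : 2 * (k * t) ≤ n) :
    (k * t : ℝ) ≤ 2 * k * t / n * (n - k + 1) := by
  have hn : (2 * (k * t) : ℝ) ≤ n := by exact_mod_cast hkt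
  rcases Nat.eq_zero_or_pos (k * t) with h0 | hpos
  · have h0' : (k * t : ℝ) = 0 := by exact_mod_cast h0
    simp [mul_assoc, h0']
  have hn0 : (0 : ℝ) < n := by exact_mod_cast (show 0 < n by omega)
  have ht : (1 : ℝ) ≤ t := by exact_mod_cast Nat.pos_of_ne_zero (right_ne_zero_of_mul hpos.ne')
  have hkt0 : (0 : ℝ) ≤ k * t := by positivity
  have h2k : (2 * k : ℝ) ≤ n := by nlinarith
  rw [div_mul_eq_mul_div, le_div_iff₀ hn0]
  nlinarith [mul_nonneg hkt0 (sub_nonneg.2 h2k)]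

theorem ProbabilityTheory.iIndepFun.measure_setOf_le_card_filter_div {Ω ι α : Type*}
    [MeasurableSpace Ω] {P : Measure Ω} [Fintype ι] [DecidableEq ι] [Fintype α] [DecidableEq α]
    {S : ι → Ω → Finset α} (hS : iIndepFun S P) {k C : ℕ}
    (hunif : ∀ i A, P (S i ⁻¹' {A}) = if #A = k then (1 : ENNReal) / C else 0)
    (Q : (ι → Finset α) → Prop) [DecidablePred Q] :
    P {ω | Q fun i => S i ω} ≤
      #{A ∈ Fintype.piFinset fun _ => powersetCard k univ | Q A} /
        (C : ENNReal) ^ Fintype.card ι := by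
  refine (hS.measure_setOf_le_sum_prod Q).trans_eq ?_
  simp only [hunif]
  rw [sum_prod_ite_eq_card_filter_mul_pow (q := fun B : Finset α => #B = k), one_div,
    ← ENNReal.inv_pow, ← div_eq_mul_inv]
  congr 3
  ext A; simp [Fintype.mem_piFinset, and_comm]

theorem repetitions_stochastically_dominated_general
    {Ω : Type*} [MeasurableSpace Ω] (P : Measure Ω)
    (n k t : ℕ) (hkn : k ≤ n) (hkt : 2 * (k * t) ≤ n)
    (S : Fin t → Ω → Finset (Fin n))
    (hindep : iIndepFun S P)
    (hunif : ∀ i (A : Finset (Fin n)),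
      P (S i ⁻¹' {A}) = if A.card = k then (1 : ENNReal) / (n.choose k) else 0)
    (x : ℕ) :
    P {ω | x ≤ ∑ i : Fin t,
          ((Finset.univ.filter (fun j => j < i)).biUnion (fun j => S j ω) ∩ S i ω).card}
      ≤ ENNReal.ofReal (∑ j ∈ Finset.Icc x (k * t),
          ((k * t).choose j : ℝ) * (2 * k * t / n) ^ j *
            (1 - 2 * k * t / n) ^ (k * t - j)) := by
  set q : ℝ := 2 * k * t / n
  have hn : (2 * (k * t) : ℝ) ≤ n := by exact_mod_cast hkt
  have hq0 : 0 ≤ q := by positivity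
  have hq1 : q ≤ 1 := div_le_one_of_le₀ (by linarith) (by positivity)
  have hcount := card_filter_le_repetitions_le (α := Fin n) (k := k) (s := t) hq0 hq1
    (by rwa [Fintype.card_fin])
    (by rw [Fintype.card_fin]; exact mul_le_two_mul_div_mul_sub_add_one hkt) x
  rw [Fintype.card_fin] at hcount
  calc P {ω | x ≤ repetitions fun i => S i ω}
      ≤ #{A ∈ Fintype.piFinset fun _ : Fin t => powersetCard k (univ : Finset (Fin n)) |
            x ≤ repetitions A} / (n.choose k : ENNReal) ^ t := by
        simpa using hindep.measure_setOf_le_card_filter_div hunif fun A => x ≤ repetitions A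
    _ ≤ ENNReal.ofReal (binomialTail q (k * t) x) := by
        refine ENNReal.div_le_of_le_mul ?_
        rw [← ENNReal.ofReal_natCast, ← ENNReal.ofReal_natCast (n.choose k),
          ← ENNReal.ofReal_pow (by positivity), ← ENNReal.ofReal_mul' (by positivity), mul_comm]
        exact ENNReal.ofReal_le_ofReal hcount

/-- Let `2 ≤ k ≤ n`, `t ≥ 2`, `kt ≤ n/2`, and let `S 0, …, S (t−1)` be i.i.d.
uniformly random `k`-element subsets of `{1,…,n}`. Then the number of
repetitions `M = Σᵢ |(S 0 ∪ ⋯ ∪ S (i−1)) ∩ S i|` is stochastically dominated by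
a `Bin(kt, 2kt/n)` random variable: for every `x`,
`P(M ≥ x) ≤ P(Bin(kt, 2kt/n) ≥ x)`, the latter written as the explicit
binomial tail sum. -/
theorem repetitions_stochastically_dominated
    {Ω : Type*} [MeasurableSpace Ω] (P : Measure Ω) [IsProbabilityMeasure P]
    (n k t : ℕ) (hk : 2 ≤ k) (hkn : k ≤ n) (ht : 2 ≤ t) (hkt : 2 * (k * t) ≤ n)
    (S : Fin t → Ω → Finset (Fin n))
    (hmeas : ∀ i, Measurable (S i))
    (hindep : iIndepFun S P)
    (hunif : ∀ i (A : Finset (Fin n)),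
      P (S i ⁻¹' {A}) = if A.card = k then (1 : ENNReal) / (n.choose k) else 0)
    (x : ℕ) :
    P {ω | x ≤ ∑ i : Fin t,
          ((Finset.univ.filter (fun j => j < i)).biUnion (fun j => S j ω) ∩ S i ω).card}
      ≤ ENNReal.ofReal (∑ j ∈ Finset.Icc x (k * t),
          ((k * t).choose j : ℝ) * (2 * k * t / n) ^ j *
            (1 - 2 * k * t / n) ^ (k * t - j)) :=
  repetitions_stochastically_dominated_general P n k t hkn hkt S hindep hunif x
end

section
/- For a Young diagram λ, a subset E of boxes of λ written as a disjoint union of subsets E₁,…,E_p, the number of excited diagrams satisfies |ℰ(λ,E)| ≤ Π_{i=1}^p |ℰ(λ,E_i)| and the excited sum satisfies S(λ,E) ≤ Π_{i=1}^p S(λ,E_i). -/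
open scoped Classical

private lemma excitedStep_subset {μ : YoungDiagram} {E F : Finset (ℕ × ℕ)}
    (h : ExcitedStep μ E F) (hE : E ⊆ μ.cells) : F ⊆ μ.cells := by
  obtain ⟨u, hu, hμ, h1, h2, h3, rfl⟩ := h
  intro x hx
  rcases Finset.mem_insert.mp hx with rfl | hx
  · exact (YoungDiagram.mem_cells _).mpr hμ
  · exact hE (Finset.mem_of_mem_erase hx)

private lemma rtg_subset {μ : YoungDiagram} {E F : Finset (ℕ × ℕ)}
    (h : Relation.ReflTransGen (ExcitedStep μ) E F) (hE : E ⊆ μ.cells) : F ⊆ μ.cells := by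
  induction h with
  | refl => exact hE
  | tail _ hbc ih => exact excitedStep_subset hbc ih

private lemma frag_decomp (μ : YoungDiagram) (p : ℕ) (Es : Fin p → Finset (ℕ × ℕ))
    (hdisj : ∀ i j, i ≠ j → Disjoint (Es i) (Es j))
    (F : Finset (ℕ × ℕ))
    (h : Relation.ReflTransGen (ExcitedStep μ) (Finset.univ.biUnion Es) F) :
    ∃ Fs : Fin p → Finset (ℕ × ℕ),
      (∀ i j, i ≠ j → Disjoint (Fs i) (Fs j)) ∧
      Finset.univ.biUnion Fs = F ∧
      ∀ i, Relation.ReflTransGen (ExcitedStep μ) (Es i) (Fs i) := by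
  induction h with
  | refl => exact ⟨Es, hdisj, rfl, fun i => Relation.ReflTransGen.refl⟩
  | @tail b c hab hbc ih =>
    obtain ⟨Fs, hFdisj, hFun, hFrtg⟩ := ih
    obtain ⟨u, hu, hμ, h1, h2, h3, rfl⟩ := hbc
    rw [← hFun] at hu
    obtain ⟨i, -, hui⟩ := Finset.mem_biUnion.mp hu
    set nb := (u.1 + 1, u.2 + 1) with hnb
    set Fi' := insert nb ((Fs i).erase u) with hFi'
    refine ⟨Function.update Fs i Fi', ?_, ?_, ?_⟩
    · intro j k hjk
      have hsub : ∀ j, Fs j ⊆ Finset.univ.biUnion Fs :=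
        fun j => Finset.subset_biUnion_of_mem Fs (Finset.mem_univ j)
      have hnbnot : ∀ j, nb ∉ Fs j := fun j hj => h3 (hFun ▸ hsub j hj)
      have key : ∀ j, j ≠ i → Disjoint Fi' (Fs j) := by
        intro j hji
        rw [hFi', Finset.disjoint_insert_left]
        exact ⟨hnbnot j, Finset.disjoint_of_subset_left (Finset.erase_subset _ _)
          (hFdisj i j (fun hh => hji hh.symm))⟩
      rcases eq_or_ne j i with rfl | hj
      · rw [Function.update_self, Function.update_of_ne (Ne.symm hjk)]
        exact key k (Ne.symm hjk)
      · rw [Function.update_of_ne hj]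
        rcases eq_or_ne k i with rfl | hk
        · rw [Function.update_self]
          exact (key j hj).symm
        · rw [Function.update_of_ne hk]
          exact hFdisj j k hjk
    · have huniq : ∀ j, j ≠ i → u ∉ Fs j := fun j hj hcon =>
        Finset.disjoint_left.mp (hFdisj j i hj) hcon hui
      ext x
      simp only [Finset.mem_biUnion, Finset.mem_univ, true_and, Finset.mem_insert,
        Finset.mem_erase]
      constructor
      · rintro ⟨j, hj⟩
        rcases eq_or_ne j i with rfl | hji
        · rw [Function.update_self, hFi'] at hj
          rcases Finset.mem_insert.mp hj with rfl | hj
          · exact Or.inl rfl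
          · refine Or.inr ⟨(Finset.mem_erase.mp hj).1, ?_⟩
            rw [← hFun]
            exact Finset.mem_biUnion.mpr ⟨j, Finset.mem_univ j,
              Finset.mem_of_mem_erase hj⟩
        · rw [Function.update_of_ne hji] at hj
          refine Or.inr ⟨fun hxu => huniq j hji (hxu ▸ hj), ?_⟩
          rw [← hFun]
          exact Finset.mem_biUnion.mpr ⟨j, Finset.mem_univ j, hj⟩
      · rintro (rfl | ⟨hxu, hx⟩)
        · exact ⟨i, by rw [Function.update_self, hFi']; exact Finset.mem_insert_self _ _⟩
        · rw [← hFun] at hx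
          obtain ⟨j, -, hj⟩ := Finset.mem_biUnion.mp hx
          rcases eq_or_ne j i with rfl | hji
          · exact ⟨j, by
              rw [Function.update_self, hFi']
              exact Finset.mem_insert_of_mem (Finset.mem_erase.mpr ⟨hxu, hj⟩)⟩
          · exact ⟨j, by rw [Function.update_of_ne hji]; exact hj⟩
    · intro j
      have hsub : ∀ j, Fs j ⊆ Finset.univ.biUnion Fs :=
        fun j => Finset.subset_biUnion_of_mem Fs (Finset.mem_univ j)
      rcases eq_or_ne j i with rfl | hji
      · rw [Function.update_self]
        refine (hFrtg j).tail ⟨u, hui, hμ, ?_, ?_, ?_, hFi'⟩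
        · exact fun hc => h1 (hFun ▸ hsub j hc)
        · exact fun hc => h2 (hFun ▸ hsub j hc)
        · exact fun hc => h3 (hFun ▸ hsub j hc)
      · rw [Function.update_of_ne hji]
        exact hFrtg j

set_option maxHeartbeats 1000000 in
/-- Fragmentation bound: if `E ⊆ λ` is written as a disjoint union of
`E₁, …, E_p`, then `|ℰ(λ,E)| ≤ ∏ᵢ |ℰ(λ,Eᵢ)|` and `S(λ,E) ≤ ∏ᵢ S(λ,Eᵢ)`. -/
theorem excited_fragmentation (lam : YoungDiagram) (E : Finset (ℕ × ℕ))
    (hE : E ⊆ lam.cells) (p : ℕ) (Es : Fin p → Finset (ℕ × ℕ))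
    (hdisj : ∀ i j, i ≠ j → Disjoint (Es i) (Es j))
    (hcover : Finset.univ.biUnion Es = E) :
    (excitedSet lam E).card ≤ ∏ i, (excitedSet lam (Es i)).card ∧
      excitedSum lam E ≤ ∏ i, excitedSum lam (Es i) := by
  classical
  have H : ∀ F ∈ excitedSet lam E, ∃ Fs : Fin p → Finset (ℕ × ℕ),
      (∀ i j, i ≠ j → Disjoint (Fs i) (Fs j)) ∧
      Finset.univ.biUnion Fs = F ∧
      ∀ i, Fs i ∈ excitedSet lam (Es i) := by
    intro F hF
    rw [excitedSet, Finset.mem_filter, Finset.mem_powerset] at hF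
    obtain ⟨Fs, hd, hu, hr⟩ := frag_decomp lam p Es hdisj F (hcover ▸ hF.2)
    refine ⟨Fs, hd, hu, fun i => ?_⟩
    rw [excitedSet, Finset.mem_filter, Finset.mem_powerset]
    have hEi : Es i ⊆ lam.cells := fun x hx =>
      hE (hcover ▸ Finset.subset_biUnion_of_mem Es (Finset.mem_univ i) hx)
    exact ⟨rtg_subset (hr i) hEi, hr i⟩
  choose! f hfd hfu hfm using H
  have hmaps : ∀ F ∈ excitedSet lam E,
      f F ∈ Fintype.piFinset (fun i => excitedSet lam (Es i)) := by
    intro F hF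
    exact Fintype.mem_piFinset.mpr (hfm F hF)
  have hinj : Set.InjOn f (excitedSet lam E) := by
    intro F hF G hG hfg
    rw [← hfu F hF, ← hfu G hG, hfg]
  have himg : (excitedSet lam E).image f ⊆
      Fintype.piFinset (fun i => excitedSet lam (Es i)) := by
    intro y hy
    obtain ⟨F, hF, rfl⟩ := Finset.mem_image.mp hy
    exact hmaps F hF
  constructor
  · calc (excitedSet lam E).card = ((excitedSet lam E).image f).card :=
          (Finset.card_image_of_injOn hinj).symm
      _ ≤ (Fintype.piFinset (fun i => excitedSet lam (Es i))).card :=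
          Finset.card_le_card himg
      _ = ∏ i, (excitedSet lam (Es i)).card := Fintype.card_piFinset _
  · have hprod : ∀ F ∈ excitedSet lam E,
        ∏ u ∈ F, hookLen lam u = ∏ i, ∏ u ∈ f F i, hookLen lam u := by
      intro F hF
      conv_lhs => rw [← hfu F hF]
      exact Finset.prod_biUnion (fun i _ j _ hij => hfd F hF i j hij)
    calc excitedSum lam E = ∑ F ∈ excitedSet lam E, ∏ u ∈ F, hookLen lam u := rfl
      _ = ∑ F ∈ excitedSet lam E, ∏ i, ∏ u ∈ f F i, hookLen lam u :=
          Finset.sum_congr rfl hprod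
      _ = ∑ y ∈ (excitedSet lam E).image f, ∏ i, ∏ u ∈ y i, hookLen lam u :=
          by
            rw [Finset.sum_image]
            exact fun F hF G hG h => hinj hF hG h
      _ ≤ ∑ y ∈ Fintype.piFinset (fun i => excitedSet lam (Es i)),
            ∏ i, ∏ u ∈ y i, hookLen lam u :=
          Finset.sum_le_sum_of_subset himg
      _ = ∏ i, excitedSum lam (Es i) := by
          simp only [excitedSum]
          exact (Finset.prod_univ_sum (fun i => excitedSet lam (Es i))
            (fun _ F => ∏ u ∈ F, hookLen lam u)).symm
end

section
/- Let λ ⊢ n with λ₁ ≥ k where 2 ≤ k ≤ n−1, set f = n−k and r = n−λ₁, and assume r ≤ f/4. Then for every 0 ≤ ℓ ≤ k, the excited sum of a row satisfies S(λ,[ℓ]) ≤ e^{6r/f} · λ₁^{↓ℓ}. -/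
open scoped Classical
open Finset
set_option maxRecDepth 10000

/-- Structure predicate: `F` consists of one cell on each diagonal `j < ℓ`,
at depths given by a function `d` monotone on `[0,ℓ)`, all cells in `lam`. -/
def Struct (lam : YoungDiagram) (ℓ : ℕ) (F : Finset (ℕ × ℕ)) : Prop :=
  ∃ d : ℕ → ℕ, (∀ j1 j2, j1 ≤ j2 → j2 < ℓ → d j1 ≤ d j2) ∧
    (∀ j < ℓ, (d j, j + d j) ∈ lam) ∧
    F = (Finset.range ℓ).image (fun j => (d j, j + d j))

lemma struct_step (lam : YoungDiagram) (ℓ : ℕ) {E F : Finset (ℕ × ℕ)}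
    (hstep : ExcitedStep lam E F) (hE : Struct lam ℓ E) : Struct lam ℓ F := by
  obtain ⟨d, hmono, hmem, rfl⟩ := hE
  obtain ⟨u, huE, humem, h1, h2, h3, rfl⟩ := hstep
  simp only [Finset.mem_image, Finset.mem_range] at huE
  obtain ⟨j₀, hj₀, hu⟩ := huE
  subst hu
  refine ⟨Function.update d j₀ (d j₀ + 1), ?_, ?_, ?_⟩
  · intro j1 j2 hle hj2
    rcases eq_or_ne j1 j₀ with rfl | h1n
    · rcases eq_or_ne j2 j1 with rfl | h2n
      · simp
      · have hlt : j1 < j2 := lt_of_le_of_ne hle (Ne.symm h2n)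
        have hkey : d j1 < d (j1 + 1) := by
          rcases lt_or_ge (d j1) (d (j1 + 1)) with h | h
          · exact h
          · exfalso
            have heq : d (j1 + 1) = d j1 := le_antisymm h (hmono j1 (j1+1) (Nat.le_succ _) (by omega))
            apply h2
            simp only [Finset.mem_image, Finset.mem_range]
            refine ⟨j1 + 1, by omega, ?_⟩
            rw [heq, Nat.add_right_comm]
        rw [Function.update_self, Function.update_of_ne h2n]
        calc d j1 + 1 ≤ d (j1 + 1) := hkey
        _ ≤ d j2 := hmono (j1+1) j2 (by omega) hj2
    · rw [Function.update_of_ne h1n]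
      rcases eq_or_ne j2 j₀ with rfl | h2n
      · rw [Function.update_self]
        exact le_trans (hmono _ _ hle hj2) (Nat.le_succ _)
      · rw [Function.update_of_ne h2n]; exact hmono _ _ hle hj2
  · intro j hj
    rcases eq_or_ne j j₀ with rfl | hn
    · simp only [Function.update_self]
      have he : j + (d j + 1) = (j + d j) + 1 := by omega
      rw [he]; exact humem
    · rw [Function.update_of_ne hn]; exact hmem j hj
  · ext x
    simp only [Finset.mem_insert, Finset.mem_erase, Finset.mem_image, Finset.mem_range]
    constructor
    · rintro (rfl | ⟨hne, j, hj, rfl⟩)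
      · exact ⟨j₀, hj₀, by rw [Function.update_self]; rfl⟩
      · have hjn : j ≠ j₀ := by
          rintro rfl; exact hne rfl
        exact ⟨j, hj, by rw [Function.update_of_ne hjn]⟩
    · rintro ⟨j, hj, rfl⟩
      rcases eq_or_ne j j₀ with rfl | hn
      · left; rw [Function.update_self]; rfl
      · right
        rw [Function.update_of_ne hn]
        refine ⟨?_, j, hj, rfl⟩
        intro hEq
        have h1 : d j = d j₀ := congrArg Prod.fst hEq
        have h2' : j + d j = j₀ + d j₀ := congrArg Prod.snd hEq
        omega

lemma struct_rowSeg (lam : YoungDiagram) (ℓ : ℕ) (hrow : ℓ ≤ lam.rowLen 0) :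
    Struct lam ℓ (rowSeg ℓ) := by
  refine ⟨fun _ => 0, fun _ _ _ _ => le_refl _, ?_, rfl⟩
  intro j hj
  have : j + 0 = j := rfl
  rw [this, YoungDiagram.mem_iff_lt_rowLen]
  exact lt_of_lt_of_le hj hrow

lemma struct_of_rtg (lam : YoungDiagram) (ℓ : ℕ) (hrow : ℓ ≤ lam.rowLen 0)
    {F : Finset (ℕ × ℕ)} (h : Relation.ReflTransGen (ExcitedStep lam) (rowSeg ℓ) F) :
    Struct lam ℓ F := by
  induction h with
  | refl => exact struct_rowSeg lam ℓ hrow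
  | tail _ h2 ih => exact struct_step lam ℓ h2 ih

/-- The overapproximating family. -/
noncomputable def SS (lam : YoungDiagram) (ℓ : ℕ) : Finset (Finset (ℕ × ℕ)) :=
  lam.cells.powerset.filter (Struct lam ℓ)

lemma excitedSet_subset_SS (lam : YoungDiagram) (ℓ : ℕ) (hrow : ℓ ≤ lam.rowLen 0) :
    excitedSet lam (rowSeg ℓ) ⊆ SS lam ℓ := by
  intro F hF
  rw [excitedSet, Finset.mem_filter] at hF
  rw [SS, Finset.mem_filter]
  exact ⟨hF.1, struct_of_rtg lam ℓ hrow hF.2⟩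

lemma notmem_of_struct {lam : YoungDiagram} {ℓ : ℕ} {F : Finset (ℕ × ℕ)}
    (hF : Struct lam ℓ F) {c : ℕ × ℕ} (hc : c.2 = ℓ + c.1) : c ∉ F := by
  obtain ⟨d, -, -, rfl⟩ := hF
  simp only [Finset.mem_image, Finset.mem_range]
  rintro ⟨j, hj, hEq⟩
  have h1 : d j = c.1 := congrArg Prod.fst hEq
  have h2 : j + d j = c.2 := congrArg Prod.snd hEq
  omega

/-- Cells of `lam` strictly below the first row, on diagonal `ℓ`. -/
noncomputable def Cdiag (lam : YoungDiagram) (ℓ : ℕ) : Finset (ℕ × ℕ) :=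
  lam.cells.filter (fun u => 1 ≤ u.1 ∧ u.2 = ℓ + u.1)

lemma SS_succ_subset (lam : YoungDiagram) (ℓ : ℕ) :
    SS lam (ℓ + 1) ⊆ insert (rowSeg (ℓ + 1))
      (((SS lam ℓ) ×ˢ (Cdiag lam ℓ)).image (fun p => insert p.2 p.1)) := by
  intro F hF
  rw [SS, Finset.mem_filter, Finset.mem_powerset] at hF
  obtain ⟨hsub, d, hmono, hmem, rfl⟩ := hF
  rcases Nat.eq_zero_or_pos (d ℓ) with h0 | hpos
  · apply Finset.mem_insert.2
    left
    rw [rowSeg]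
    apply Finset.image_congr
    intro j hj
    rw [Finset.mem_coe, Finset.mem_range] at hj
    have hd0 : d j = 0 := by
      have := hmono j ℓ (by omega) (by omega)
      omega
    show (d j, j + d j) = ((0 : ℕ), j)
    rw [hd0]
    rfl
  · apply Finset.mem_insert.2
    right
    rw [Finset.mem_image]
    have hrange : Finset.range (ℓ + 1) = insert ℓ (Finset.range ℓ) := by
      rw [Finset.range_add_one]
    refine ⟨(((Finset.range ℓ).image (fun j => (d j, j + d j))), (d ℓ, ℓ + d ℓ)), ?_, ?_⟩
    · rw [Finset.mem_product]
      constructor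
      · rw [SS, Finset.mem_filter, Finset.mem_powerset]
        refine ⟨?_, d, fun j1 j2 h1 h2 => hmono j1 j2 h1 (by omega), fun j hj => hmem j (by omega), rfl⟩
        intro x hx
        apply hsub
        rw [hrange, Finset.image_insert]
        exact Finset.mem_insert_of_mem hx
      · rw [Cdiag, Finset.mem_filter]
        exact ⟨(lam.mem_cells _).2 (hmem ℓ (by omega)), hpos, rfl⟩
    · rw [hrange, Finset.image_insert]

noncomputable def Sprime (lam : YoungDiagram) (ℓ : ℕ) : ℕ :=
  ∑ F ∈ SS lam ℓ, ∏ u ∈ F, hookLen lam u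

noncomputable def Prow (lam : YoungDiagram) (m : ℕ) : ℕ :=
  ∏ j ∈ Finset.range m, hookLen lam (0, j)

noncomputable def Bd (lam : YoungDiagram) (ℓ : ℕ) : ℕ :=
  ∑ c ∈ Cdiag lam ℓ, hookLen lam c

lemma prod_rowSeg (lam : YoungDiagram) (m : ℕ) :
    ∏ u ∈ rowSeg m, hookLen lam u = Prow lam m := by
  rw [rowSeg, Prow, Finset.prod_image]
  intro x _ y _ h
  exact congrArg Prod.snd h

lemma struct_of_mem_SS {lam : YoungDiagram} {ℓ : ℕ} {F : Finset (ℕ × ℕ)}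
    (h : F ∈ SS lam ℓ) : Struct lam ℓ F := (Finset.mem_filter.1 h).2

lemma diag_of_mem_Cdiag {lam : YoungDiagram} {ℓ : ℕ} {c : ℕ × ℕ}
    (h : c ∈ Cdiag lam ℓ) : c.2 = ℓ + c.1 := (Finset.mem_filter.1 h).2.2

lemma Sprime_succ_le (lam : YoungDiagram) (ℓ : ℕ) :
    Sprime lam (ℓ + 1) ≤ Prow lam (ℓ + 1) + Bd lam ℓ * Sprime lam ℓ := by
  have hinj : ∀ p ∈ (SS lam ℓ) ×ˢ (Cdiag lam ℓ), ∀ q ∈ (SS lam ℓ) ×ˢ (Cdiag lam ℓ),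
      insert p.2 p.1 = insert q.2 q.1 → p = q := by
    intro p hp q hq hEq
    obtain ⟨p1, p2⟩ := p
    obtain ⟨q1, q2⟩ := q
    rw [Finset.mem_product] at hp hq
    have hps := struct_of_mem_SS hp.1
    have hqs := struct_of_mem_SS hq.1
    have hp2 : p2 ∉ p1 := notmem_of_struct hps (diag_of_mem_Cdiag hp.2)
    have hq2 : q2 ∉ q1 := notmem_of_struct hqs (diag_of_mem_Cdiag hq.2)
    have hmem : p2 ∈ insert q2 q1 := by
      rw [← hEq]; exact Finset.mem_insert_self _ _
    rcases Finset.mem_insert.1 hmem with h22 | hbad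
    · subst h22
      have h11 := congrArg (fun s => Finset.erase s p2) hEq
      simp only [Finset.erase_insert hp2, Finset.erase_insert hq2] at h11
      rw [h11]
    · exact absurd hbad (notmem_of_struct hqs (diag_of_mem_Cdiag hp.2))
  calc Sprime lam (ℓ + 1)
      ≤ ∑ F ∈ insert (rowSeg (ℓ + 1))
          (((SS lam ℓ) ×ˢ (Cdiag lam ℓ)).image (fun p => insert p.2 p.1)),
          ∏ u ∈ F, hookLen lam u := by
        apply Finset.sum_le_sum_of_subset (SS_succ_subset lam ℓ)
    _ ≤ Prow lam (ℓ + 1) + ∑ F ∈ ((SS lam ℓ) ×ˢ (Cdiag lam ℓ)).image (fun p => insert p.2 p.1),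
          ∏ u ∈ F, hookLen lam u := by
        by_cases hR : rowSeg (ℓ + 1) ∈ ((SS lam ℓ) ×ˢ (Cdiag lam ℓ)).image (fun p => insert p.2 p.1)
        · rw [Finset.insert_eq_self.2 hR]
          exact Nat.le_add_left _ _
        · rw [Finset.sum_insert hR, prod_rowSeg]
    _ = Prow lam (ℓ + 1) + ∑ p ∈ (SS lam ℓ) ×ˢ (Cdiag lam ℓ),
          ∏ u ∈ insert p.2 p.1, hookLen lam u := by
        rw [Finset.sum_image hinj]
    _ = Prow lam (ℓ + 1) + Bd lam ℓ * Sprime lam ℓ := by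
        congr 1
        rw [Finset.sum_product_right, Bd, Sprime, Finset.sum_mul]
        apply Finset.sum_congr rfl
        intro c hc
        rw [Finset.mul_sum]
        apply Finset.sum_congr rfl
        intro F hF
        rw [Finset.prod_insert (notmem_of_struct (struct_of_mem_SS hF) (diag_of_mem_Cdiag hc))]

/-- Number of cells strictly below the first row. -/
lemma card_below (lam : YoungDiagram) :
    (lam.cells.filter (fun v => 1 ≤ v.1)).card = lam.card - lam.rowLen 0 := by
  have h := Finset.card_filter_add_card_filter_not
    (s := lam.cells) (p := fun v => v.1 = 0)
  have hrow : (lam.cells.filter (fun v => v.1 = 0)).card = lam.rowLen 0 := by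
    rw [lam.rowLen_eq_card]
    rfl
  have hcongr : lam.cells.filter (fun v => 1 ≤ v.1)
      = lam.cells.filter (fun v => ¬ v.1 = 0) := by
    apply Finset.filter_congr
    intro v _
    constructor
    · intro h1 h0; omega
    · intro h0; omega
  rw [hcongr]
  have hc : lam.card = lam.cells.card := rfl
  omega

lemma hookLen_mem_le (lam : YoungDiagram) (u : ℕ × ℕ) {v : ℕ × ℕ}
    (hv : v ∈ lam.cells.filter (fun v => (v.1 = u.1 ∧ u.2 ≤ v.2) ∨ (u.1 ≤ v.1 ∧ v.2 = u.2))) :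
    v ∈ lam.cells ∧ ((v.1 = u.1 ∧ u.2 ≤ v.2) ∨ (u.1 ≤ v.1 ∧ v.2 = u.2)) :=
  Finset.mem_filter.1 hv

lemma Bd_le (lam : YoungDiagram) (ℓ : ℕ) : Bd lam ℓ ≤ lam.card - lam.rowLen 0 := by
  rw [Bd]
  set hs : ℕ × ℕ → Finset (ℕ × ℕ) := fun c =>
    lam.cells.filter (fun v => (v.1 = c.1 ∧ c.2 ≤ v.2) ∨ (c.1 ≤ v.1 ∧ v.2 = c.2)) with hhs
  have hdisj : ∀ c ∈ Cdiag lam ℓ, ∀ c' ∈ Cdiag lam ℓ, c ≠ c' → Disjoint (hs c) (hs c') := by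
    intro c hc c' hc' hne
    have h1 := Finset.mem_filter.1 hc |>.2
    have h2 := Finset.mem_filter.1 hc' |>.2
    rw [Finset.disjoint_left]
    intro v hv hv'
    have g1 := (Finset.mem_filter.1 hv).2
    have g2 := (Finset.mem_filter.1 hv').2
    have hne1 : c.1 ≠ c'.1 := by
      intro hEq
      apply hne
      have : c.2 = c'.2 := by omega
      exact Prod.ext hEq this
    omega
  have hcard : ∑ c ∈ Cdiag lam ℓ, hookLen lam c = ((Cdiag lam ℓ).biUnion hs).card := by
    rw [Finset.card_biUnion hdisj]
    rfl
  rw [hcard, ← card_below lam]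
  apply Finset.card_le_card
  intro v hv
  rw [Finset.mem_biUnion] at hv
  obtain ⟨c, hc, hvc⟩ := hv
  have h1 := Finset.mem_filter.1 hc |>.2
  have g1 := Finset.mem_filter.1 hvc
  rw [Finset.mem_filter]
  exact ⟨g1.1, by rcases g1.2 with ⟨ha, _⟩ | ⟨ha, _⟩ <;> omega⟩

lemma SS_zero (lam : YoungDiagram) : SS lam 0 ⊆ {∅} := by
  intro F hF
  obtain ⟨d, -, -, rfl⟩ := struct_of_mem_SS hF
  simp

lemma Sprime_le_sum (lam : YoungDiagram) (ℓ : ℕ) :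
    Sprime lam ℓ ≤ ∑ m ∈ Finset.range (ℓ + 1),
      (lam.card - lam.rowLen 0) ^ (ℓ - m) * Prow lam m := by
  induction ℓ with
  | zero =>
      calc Sprime lam 0 ≤ ∑ F ∈ ({∅} : Finset (Finset (ℕ × ℕ))), ∏ u ∈ F, hookLen lam u :=
            Finset.sum_le_sum_of_subset (SS_zero lam)
        _ = 1 := by simp
        _ ≤ _ := by simp [Prow]
  | succ ℓ ih =>
      set R := lam.card - lam.rowLen 0 with hR
      calc Sprime lam (ℓ + 1) ≤ Prow lam (ℓ + 1) + Bd lam ℓ * Sprime lam ℓ :=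
            Sprime_succ_le lam ℓ
        _ ≤ Prow lam (ℓ + 1) + R * ∑ m ∈ Finset.range (ℓ + 1), R ^ (ℓ - m) * Prow lam m := by
            apply Nat.add_le_add_left
            exact Nat.mul_le_mul (Bd_le lam ℓ) ih
        _ = Prow lam (ℓ + 1) + ∑ m ∈ Finset.range (ℓ + 1), R ^ (ℓ + 1 - m) * Prow lam m := by
            rw [Finset.mul_sum]
            congr 1
            apply Finset.sum_congr rfl
            intro m hm
            rw [Finset.mem_range] at hm
            have : ℓ + 1 - m = (ℓ - m) + 1 := by omega
            rw [this, pow_succ, ← mul_assoc]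
            ring
        _ = ∑ m ∈ Finset.range (ℓ + 2), R ^ (ℓ + 1 - m) * Prow lam m := by
            rw [Finset.sum_range_succ (fun m => R ^ (ℓ + 1 - m) * Prow lam m) (ℓ + 1)]
            simp [add_comm]

noncomputable def colBelow (lam : YoungDiagram) (j : ℕ) : ℕ :=
  (lam.cells.filter (fun v => 1 ≤ v.1 ∧ v.2 = j)).card

lemma hook_row_le (lam : YoungDiagram) (j : ℕ) :
    hookLen lam (0, j) ≤ (lam.rowLen 0 - j) + colBelow lam j := by
  rw [hookLen, colBelow]
  have hsub : lam.cells.filter (fun v => (v.1 = (0:ℕ) ∧ j ≤ v.2) ∨ ((0:ℕ) ≤ v.1 ∧ v.2 = j))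
      ⊆ ((Finset.Ico j (lam.rowLen 0)).image (fun t => ((0:ℕ), t)))
        ∪ lam.cells.filter (fun v => 1 ≤ v.1 ∧ v.2 = j) := by
    intro v hv
    obtain ⟨hvc, hvp⟩ := Finset.mem_filter.1 hv
    rw [Finset.mem_union]
    rcases Nat.eq_zero_or_pos v.1 with h0 | h1
    · left
      rw [Finset.mem_image]
      refine ⟨v.2, ?_, ?_⟩
      · rw [Finset.mem_Ico]
        have hlt : v.2 < lam.rowLen 0 := by
          rw [← YoungDiagram.mem_iff_lt_rowLen, ← h0]
          exact (lam.mem_cells _).1 (by rwa [Prod.mk.eta])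
        have hge : j ≤ v.2 := by omega
        exact ⟨hge, hlt⟩
      · rw [← h0, Prod.mk.eta]
    · right
      rw [Finset.mem_filter]
      refine ⟨hvc, h1, by omega⟩
  calc (lam.cells.filter _).card ≤ _ := Finset.card_le_card hsub
    _ ≤ ((Finset.Ico j (lam.rowLen 0)).image (fun t => ((0:ℕ), t))).card
        + (lam.cells.filter (fun v => 1 ≤ v.1 ∧ v.2 = j)).card := Finset.card_union_le _ _
    _ ≤ (lam.rowLen 0 - j) + (lam.cells.filter (fun v => 1 ≤ v.1 ∧ v.2 = j)).card := by
        apply Nat.add_le_add_right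
        calc _ ≤ (Finset.Ico j (lam.rowLen 0)).card := Finset.card_image_le
          _ = lam.rowLen 0 - j := Nat.card_Ico _ _

lemma sum_colBelow_le (lam : YoungDiagram) (m : ℕ) :
    ∑ j ∈ Finset.range m, colBelow lam j ≤ lam.card - lam.rowLen 0 := by
  set ts : ℕ → Finset (ℕ × ℕ) := fun j => lam.cells.filter (fun v => 1 ≤ v.1 ∧ v.2 = j) with hts
  have hdisj : ∀ j ∈ Finset.range m, ∀ j' ∈ Finset.range m, j ≠ j' → Disjoint (ts j) (ts j') := by
    intro j _ j' _ hne
    rw [Finset.disjoint_left]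
    intro v hv hv'
    have g1 := (Finset.mem_filter.1 hv).2
    have g2 := (Finset.mem_filter.1 hv').2
    omega
  have hcard : ∑ j ∈ Finset.range m, colBelow lam j = ((Finset.range m).biUnion ts).card := by
    rw [Finset.card_biUnion hdisj]
    rfl
  rw [hcard, ← card_below lam]
  apply Finset.card_le_card
  intro v hv
  rw [Finset.mem_biUnion] at hv
  obtain ⟨j, _, hvj⟩ := hv
  have := Finset.mem_filter.1 hvj
  rw [Finset.mem_filter]
  exact ⟨this.1, this.2.1⟩

lemma desc_split (L m i : ℕ) (hL : m + i ≤ L) :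
    L.descFactorial m * (L - (m + i) + 1) ^ i ≤ L.descFactorial (m + i) := by
  rw [Nat.descFactorial_eq_prod_range, Nat.descFactorial_eq_prod_range, Finset.prod_range_add]
  apply Nat.mul_le_mul_left
  calc (L - (m + i) + 1) ^ i = ∏ _t ∈ Finset.range i, (L - (m + i) + 1) := by
        rw [Finset.prod_const, Finset.card_range]
    _ ≤ ∏ t ∈ Finset.range i, (L - (m + t)) := by
        apply Finset.prod_le_prod'
        intro t ht
        rw [Finset.mem_range] at ht
        omega

lemma geomSumLe (x : ℝ) (h0 : 0 ≤ x) (h3 : x ≤ 1/3) (t : ℕ) :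
    ∑ i ∈ Finset.range t, x ^ i ≤ Real.exp (2 * x) := by
  have hx1 : (1 : ℝ) - x > 0 := by linarith
  have hne : x ≠ 1 := by intro h; rw [h] at h3; norm_num at h3
  have hsum : ∑ i ∈ Finset.range t, x ^ i = (1 - x ^ t) / (1 - x) := by
    rw [geom_sum_eq hne t, div_eq_div_iff (by intro h; apply hne; linarith [sub_eq_zero.1 h]) (by linarith)]
    ring
  rw [hsum]
  have h1 : (1 - x ^ t) / (1 - x) ≤ 1 / (1 - x) := by
    gcongr <;> linarith [pow_nonneg h0 t]
  have h2 : 1 / (1 - x) ≤ 1 + 2 * x := by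
    rw [div_le_iff₀ hx1]
    nlinarith
  have h3' := Real.add_one_le_exp (2 * x)
  linarith

theorem excitedSum_row_le' (n k : ℕ) (hk : 2 ≤ k) (hkn : k ≤ n - 1)
    (lam : YoungDiagram) (hcard : lam.card = n) (hk1 : k ≤ lam.rowLen 0)
    (hr : 4 * (n - lam.rowLen 0) ≤ n - k) (ℓ : ℕ) (hℓ : ℓ ≤ k) :
    (excitedSum lam (rowSeg ℓ) : ℝ) ≤
      Real.exp (6 * ((n - lam.rowLen 0 : ℕ) : ℝ) / ((n - k : ℕ) : ℝ)) *
        ((lam.rowLen 0).descFactorial ℓ : ℝ) := by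
  set L := lam.rowLen 0 with hLdef
  have hLn : L ≤ n := by
    rw [← hcard]
    rw [hLdef, lam.rowLen_eq_card]
    exact Finset.card_le_card (Finset.filter_subset _ _)
  set R : ℕ := n - L with hRdef
  set Fq : ℕ := n - k with hFqdef
  set D : ℕ := L - ℓ + 1 with hDdef
  have hℓL : ℓ ≤ L := le_trans hℓ hk1
  have hRcard : lam.card - L = R := by rw [hcard]
  have hFq0 : 0 < Fq := by omega
  have hD0 : 0 < D := by omega
  have h3R : 3 * R ≤ D := by omega
  have h2D : Fq ≤ 2 * D := by omega
  have hD0' : (0:ℝ) < (D:ℝ) := by exact_mod_cast hD0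
  have hFq0' : (0:ℝ) < (Fq:ℝ) := by exact_mod_cast hFq0
  set x : ℝ := (R:ℝ) / (D:ℝ) with hxdef
  have hx0 : 0 ≤ x := by positivity
  have hx3 : x ≤ 1/3 := by
    rw [hxdef, div_le_iff₀ hD0']
    have : (3:ℝ) * R ≤ (D:ℝ) := by exact_mod_cast h3R
    linarith
  -- step 0 and 1 (ℕ)
  have step01 : excitedSum lam (rowSeg ℓ) ≤
      ∑ m ∈ Finset.range (ℓ + 1), R ^ (ℓ - m) * Prow lam m := by
    calc excitedSum lam (rowSeg ℓ) ≤ Sprime lam ℓ :=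
          Finset.sum_le_sum_of_subset (excitedSet_subset_SS lam ℓ hℓL)
      _ ≤ ∑ m ∈ Finset.range (ℓ + 1), (lam.card - L) ^ (ℓ - m) * Prow lam m :=
          Sprime_le_sum lam ℓ
      _ = _ := by rw [hRcard]
  -- Sub A
  have subA : ∀ m, m ≤ ℓ → (Prow lam m : ℝ) ≤ Real.exp x * (L.descFactorial m : ℝ) := by
    intro m hm
    have key : ∀ j ∈ Finset.range m, (hookLen lam (0, j) : ℝ) ≤
        ((L - j : ℕ) : ℝ) * Real.exp ((colBelow lam j : ℝ) / (D:ℝ)) := by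
      intro j hj
      rw [Finset.mem_range] at hj
      have h1 : hookLen lam (0, j) ≤ (L - j) + colBelow lam j := hook_row_le lam j
      have hDle : D ≤ L - j := by omega
      have hDle' : (D:ℝ) ≤ ((L - j : ℕ):ℝ) := by exact_mod_cast hDle
      have hcnn : (0:ℝ) ≤ (colBelow lam j : ℝ) := Nat.cast_nonneg _
      have hc : (colBelow lam j : ℝ) ≤ ((L - j : ℕ):ℝ) * ((colBelow lam j : ℝ) / (D:ℝ)) := by
        rw [mul_div_assoc', le_div_iff₀ hD0']
        nlinarith
      have hexp := Real.add_one_le_exp ((colBelow lam j : ℝ) / (D:ℝ))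
      calc (hookLen lam (0, j) : ℝ) ≤ ((L - j : ℕ):ℝ) + (colBelow lam j : ℝ) := by
            exact_mod_cast h1
        _ ≤ ((L - j : ℕ):ℝ) * (1 + (colBelow lam j : ℝ) / (D:ℝ)) := by
            rw [mul_add, mul_one]
            linarith
        _ ≤ ((L - j : ℕ):ℝ) * Real.exp ((colBelow lam j : ℝ) / (D:ℝ)) := by
            apply mul_le_mul_of_nonneg_left _ (Nat.cast_nonneg _)
            linarith
    calc (Prow lam m : ℝ) = ∏ j ∈ Finset.range m, (hookLen lam (0, j) : ℝ) := by
          rw [Prow]; push_cast; rfl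
      _ ≤ ∏ j ∈ Finset.range m, ((L - j : ℕ) : ℝ) * Real.exp ((colBelow lam j : ℝ) / (D:ℝ)) :=
          Finset.prod_le_prod (fun j _ => Nat.cast_nonneg _) key
      _ = (∏ j ∈ Finset.range m, ((L - j : ℕ) : ℝ)) *
            Real.exp (∑ j ∈ Finset.range m, (colBelow lam j : ℝ) / (D:ℝ)) := by
          rw [Finset.prod_mul_distrib, Real.exp_sum]
      _ ≤ (L.descFactorial m : ℝ) * Real.exp x := by
          have hfac : (∏ j ∈ Finset.range m, ((L - j : ℕ) : ℝ)) = (L.descFactorial m : ℝ) := by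
            rw [Nat.descFactorial_eq_prod_range]
            push_cast
            rfl
          rw [hfac]
          apply mul_le_mul_of_nonneg_left _ (Nat.cast_nonneg _)
          apply Real.exp_le_exp.2
          rw [← Finset.sum_div, hxdef]
          gcongr
          have hsum : ∑ j ∈ Finset.range m, colBelow lam j ≤ R := by
            rw [← hRcard]
            exact sum_colBelow_le lam m
          exact_mod_cast hsum
      _ = Real.exp x * (L.descFactorial m : ℝ) := mul_comm _ _
  -- Sub B
  have hxD : x * (D:ℝ) = (R:ℝ) := div_mul_cancel₀ _ (ne_of_gt hD0')
  have subB : ∀ m, m ≤ ℓ → ((R:ℝ)) ^ (ℓ - m) * (L.descFactorial m : ℝ) ≤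
      x ^ (ℓ - m) * (L.descFactorial ℓ : ℝ) := by
    intro m hm
    have hsplit : D ^ (ℓ - m) * L.descFactorial m ≤ L.descFactorial ℓ := by
      have h := desc_split L m (ℓ - m) (by omega)
      have hme : m + (ℓ - m) = ℓ := by omega
      rw [hme] at h
      rw [Nat.mul_comm]
      exact h
    calc (R:ℝ) ^ (ℓ - m) * (L.descFactorial m : ℝ)
        = x ^ (ℓ - m) * ((D:ℝ) ^ (ℓ - m) * (L.descFactorial m : ℝ)) := by
          rw [← mul_assoc, ← mul_pow, hxD]
      _ ≤ x ^ (ℓ - m) * (L.descFactorial ℓ : ℝ) := by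
          apply mul_le_mul_of_nonneg_left _ (pow_nonneg hx0 _)
          exact_mod_cast hsplit
  have hswap : ∑ m ∈ Finset.range (ℓ+1), x ^ (ℓ - m) * (L.descFactorial ℓ : ℝ)
      = (L.descFactorial ℓ : ℝ) * ∑ m ∈ Finset.range (ℓ+1), x ^ (ℓ - m) := by
    rw [Finset.mul_sum]
    apply Finset.sum_congr rfl
    intro m _
    ring
  calc (excitedSum lam (rowSeg ℓ) : ℝ)
      ≤ ((∑ m ∈ Finset.range (ℓ+1), R ^ (ℓ - m) * Prow lam m : ℕ) : ℝ) := by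
        exact_mod_cast step01
    _ = ∑ m ∈ Finset.range (ℓ+1), (R:ℝ) ^ (ℓ - m) * (Prow lam m : ℝ) := by
        push_cast
        rfl
    _ ≤ ∑ m ∈ Finset.range (ℓ+1), (R:ℝ) ^ (ℓ - m) * (Real.exp x * (L.descFactorial m : ℝ)) := by
        apply Finset.sum_le_sum
        intro m hm
        rw [Finset.mem_range] at hm
        exact mul_le_mul_of_nonneg_left (subA m (by omega)) (pow_nonneg (Nat.cast_nonneg _) _)
    _ = Real.exp x * ∑ m ∈ Finset.range (ℓ+1), (R:ℝ) ^ (ℓ - m) * (L.descFactorial m : ℝ) := by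
        rw [Finset.mul_sum]
        apply Finset.sum_congr rfl
        intro m _
        ring
    _ ≤ Real.exp x * ∑ m ∈ Finset.range (ℓ+1), x ^ (ℓ - m) * (L.descFactorial ℓ : ℝ) := by
        apply mul_le_mul_of_nonneg_left _ (le_of_lt (Real.exp_pos x))
        apply Finset.sum_le_sum
        intro m hm
        rw [Finset.mem_range] at hm
        exact subB m (by omega)
    _ = Real.exp x * ((L.descFactorial ℓ : ℝ) * ∑ m ∈ Finset.range (ℓ+1), x ^ (ℓ - m)) := by
        rw [hswap]
    _ ≤ Real.exp x * ((L.descFactorial ℓ : ℝ) * Real.exp (2*x)) := by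
        apply mul_le_mul_of_nonneg_left _ (le_of_lt (Real.exp_pos x))
        apply mul_le_mul_of_nonneg_left _ (Nat.cast_nonneg _)
        have hrefl := Finset.sum_range_reflect (fun i => x ^ i) (ℓ + 1)
        have hmid : ∑ m ∈ Finset.range (ℓ+1), x ^ (ℓ - m)
            = ∑ m ∈ Finset.range (ℓ+1), x ^ (ℓ + 1 - 1 - m) := by
          apply Finset.sum_congr rfl
          intro m hm
          congr 1
        rw [hmid, hrefl]
        exact geomSumLe x hx0 hx3 (ℓ+1)
    _ = Real.exp (x + 2*x) * (L.descFactorial ℓ : ℝ) := by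
        rw [Real.exp_add]
        ring
    _ ≤ Real.exp (6 * (R:ℝ) / (Fq:ℝ)) * (L.descFactorial ℓ : ℝ) := by
        apply mul_le_mul_of_nonneg_right _ (Nat.cast_nonneg _)
        apply Real.exp_le_exp.2
        have h2D' : (Fq:ℝ) ≤ 2 * (D:ℝ) := by exact_mod_cast h2D
        have hRnn : (0:ℝ) ≤ (R:ℝ) := Nat.cast_nonneg _
        have hkey : (R:ℝ)/(D:ℝ) * 3 ≤ 6 * (R:ℝ)/(Fq:ℝ) := by
          rw [div_mul_eq_mul_div, div_le_div_iff₀ hD0' hFq0']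
          nlinarith
        rw [hxdef]
        linarith

/-- Let `λ ⊢ n` with `λ₁ ≥ k`, where `2 ≤ k ≤ n − 1`; set `f = n − k` and
`r = n − λ₁`, and assume `r ≤ f/4`. Then for every `0 ≤ ℓ ≤ k`,
`S(λ,[ℓ]) ≤ e^{6r/f} · λ₁^{↓ℓ}`. -/
theorem excitedSum_row_le (n k : ℕ) (hk : 2 ≤ k) (hkn : k ≤ n - 1)
    (lam : YoungDiagram) (hcard : lam.card = n) (hk1 : k ≤ lam.rowLen 0)
    (hr : 4 * (n - lam.rowLen 0) ≤ n - k) (ℓ : ℕ) (hℓ : ℓ ≤ k) :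
    (excitedSum lam (rowSeg ℓ) : ℝ) ≤
      Real.exp (6 * ((n - lam.rowLen 0 : ℕ) : ℝ) / ((n - k : ℕ) : ℝ)) *
        ((lam.rowLen 0).descFactorial ℓ : ℝ) :=
  excitedSum_row_le' n k hk hkn lam hcard hk1 hr ℓ hℓ
end
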